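/- arXiv:1006.5689 — 11 statements merged into one kernel-verified Lean document; each statement's English description precedes it below -/
import Mathlib

section
/- Let s₊ > 0 and let Q be a 3×3 real symmetric traceless matrix satisfying tr(Q²) = 2s₊²/3 and tr(Q³) = 2s₊³/9. Then Q = s₊(n ⊗ n − (1/3)I) for some unit vector n ∈ ℝ³. -/
set_option maxHeartbeats 1600000

open Matrix

private lemma rankone (s A0 A1 A2 b c e : ℝ) (hs : 0 < s) (h0 : 0 < A0)
    (hE : A0^2 + b^2 + c^2 = s * A0)
    (m1 : A0 * A1 = b^2) (m2 : A0 * A2 = c^2) (hu : A0 * e = b * c) :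
    ∃ x y z : ℝ, x^2 + y^2 + z^2 = 1 ∧ s*(x*x) = A0 ∧ s*(x*y) = b ∧ s*(x*z) = c
      ∧ s*(y*y) = A1 ∧ s*(y*z) = e ∧ s*(z*z) = A2 := by
  have hsA : (0:ℝ) < s * A0 := mul_pos hs h0
  have hr : Real.sqrt (s * A0) ^ 2 = s * A0 := Real.sq_sqrt hsA.le
  have hrpos : 0 < Real.sqrt (s * A0) := Real.sqrt_pos.mpr hsA
  set r := Real.sqrt (s * A0) with hrdef
  have key : ∀ u v w : ℝ, A0 * w = u * v → s * ((u/r) * (v/r)) = w := by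
    intro u v w huv
    have hrr : r * r = s * A0 := by nlinarith [hr]
    rw [div_mul_div_comm, hrr, ← mul_div_assoc, div_eq_iff hsA.ne']
    linear_combination (-s) * huv
  refine ⟨A0 / r, b / r, c / r, ?_, ?_, ?_, ?_, ?_, ?_, ?_⟩
  · rw [div_pow, div_pow, div_pow, ← add_div, ← add_div, hE, hr]
    exact div_self hsA.ne'
  · exact key A0 A0 A0 (by ring)
  · exact key A0 b b (by ring)
  · exact key A0 c c (by ring)
  · exact key b b A1 (by linarith [m1.symm]; )
  · exact key b c e hu
  · exact key c c A2 (by linarith [m2.symm])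

private lemma assemble (s : ℝ) (Q : Matrix (Fin 3) (Fin 3) ℝ)
    (sy10 : Q 1 0 = Q 0 1) (sy20 : Q 2 0 = Q 0 2) (sy21 : Q 2 1 = Q 1 2)
    (x y z : ℝ) (hsum : x^2 + y^2 + z^2 = 1)
    (h00 : s*(x*x) = Q 0 0 + s/3) (h01 : s*(x*y) = Q 0 1) (h02 : s*(x*z) = Q 0 2)
    (h11 : s*(y*y) = Q 1 1 + s/3) (h12 : s*(y*z) = Q 1 2) (h22 : s*(z*z) = Q 2 2 + s/3) :
    ∃ n : Fin 3 → ℝ, (∑ i, n i ^ 2 = 1) ∧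
      Q = s • (vecMulVec n n - (3 : ℝ)⁻¹ • (1 : Matrix (Fin 3) (Fin 3) ℝ)) := by
  refine ⟨![x, y, z], by simp [Fin.sum_univ_three]; linarith, ?_⟩
  ext i j
  fin_cases i <;> fin_cases j <;>
    simp [vecMulVec_apply, Matrix.smul_apply, Matrix.sub_apply, Matrix.one_apply] <;>
    first
      | linear_combination -h00
      | linear_combination -h01
      | linear_combination -h02
      | linear_combination -h11
      | linear_combination -h12
      | linear_combination -h22
      | linear_combination sy10 - h01
      | linear_combination sy20 - h02
      | linear_combination sy21 - h12

theorem stmt_1 (s : ℝ) (hs : 0 < s) (Q : Matrix (Fin 3) (Fin 3) ℝ)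
    (hsym : Q.IsSymm) (htr : Q.trace = 0)
    (h2 : (Q * Q).trace = 2 * s ^ 2 / 3) (h3 : (Q * Q * Q).trace = 2 * s ^ 3 / 9) :
    ∃ n : Fin 3 → ℝ, (∑ i, n i ^ 2 = 1) ∧
      Q = s • (vecMulVec n n - (3 : ℝ)⁻¹ • (1 : Matrix (Fin 3) (Fin 3) ℝ)) := by
  have sy10 : Q 1 0 = Q 0 1 := hsym.apply 0 1
  have sy20 : Q 2 0 = Q 0 2 := hsym.apply 0 2
  have sy21 : Q 2 1 = Q 1 2 := hsym.apply 1 2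
  rw [Matrix.trace_fin_three] at htr h2 h3
  simp only [Matrix.mul_apply, Fin.sum_univ_three] at h2 h3
  rw [sy10, sy20, sy21] at h2 h3
  set a := Q 0 0 with ha
  set b := Q 0 1 with hb
  set c := Q 0 2 with hc
  set d := Q 1 1 with hd
  set e := Q 1 2 with he
  set f := Q 2 2 with hf
  have H1 : a + d + f = 0 := htr
  have H2 : a^2 + d^2 + f^2 + 2*b^2 + 2*c^2 + 2*e^2 = 2*s^2/3 := by linear_combination h2
  have H3 : a^3 + d^3 + f^3 + 3*a*b^2 + 3*a*c^2 + 3*d*b^2 + 3*d*e^2 + 3*f*c^2 + 3*f*e^2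
      + 6*b*c*e = 2*s^3/9 := by linear_combination h3
  -- trace of B^2 is zero, where B = Q^2 - (s/3) Q - (2 s^2/9) I  (Cayley-Hamilton consequence)
  have key : (a^2+b^2+c^2 - s/3*a - 2*s^2/9)^2 + (b^2+d^2+e^2 - s/3*d - 2*s^2/9)^2
      + (c^2+e^2+f^2 - s/3*f - 2*s^2/9)^2 + 2*(a*b+b*d+c*e - s/3*b)^2
      + 2*(a*c+b*e+c*f - s/3*c)^2 + 2*(b*c+d*e+e*f - s/3*e)^2 = 0 := by
    linear_combination
      ((a+d+f)^3/6 - (a+d+f)*(a^2+d^2+f^2+2*b^2+2*c^2+2*e^2 - 2*s^2/3)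
        - 2*s^2/3*(a+d+f) + 4*s^3/9) * H1
      + ((a^2+d^2+f^2+2*b^2+2*c^2+2*e^2 - 2*s^2/3)/2 + s^2/3) * H2
      + (4*(a+d+f)/3 - 2*s/3) * H3
  have hB00 : a^2+b^2+c^2 - s/3*a - 2*s^2/9 = 0 := by
    have h : (a^2+b^2+c^2 - s/3*a - 2*s^2/9)^2 = 0 := by
      linarith [key, sq_nonneg (a^2+b^2+c^2 - s/3*a - 2*s^2/9), sq_nonneg (b^2+d^2+e^2 - s/3*d - 2*s^2/9),
        sq_nonneg (c^2+e^2+f^2 - s/3*f - 2*s^2/9), sq_nonneg (a*b+b*d+c*e - s/3*b),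
        sq_nonneg (a*c+b*e+c*f - s/3*c), sq_nonneg (b*c+d*e+e*f - s/3*e)]
    exact pow_eq_zero_iff two_ne_zero |>.mp h
  have hB11 : b^2+d^2+e^2 - s/3*d - 2*s^2/9 = 0 := by
    have h : (b^2+d^2+e^2 - s/3*d - 2*s^2/9)^2 = 0 := by
      linarith [key, sq_nonneg (b^2+d^2+e^2 - s/3*d - 2*s^2/9), sq_nonneg (a^2+b^2+c^2 - s/3*a - 2*s^2/9),
        sq_nonneg (c^2+e^2+f^2 - s/3*f - 2*s^2/9), sq_nonneg (a*b+b*d+c*e - s/3*b),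
        sq_nonneg (a*c+b*e+c*f - s/3*c), sq_nonneg (b*c+d*e+e*f - s/3*e)]
    exact pow_eq_zero_iff two_ne_zero |>.mp h
  have hB22 : c^2+e^2+f^2 - s/3*f - 2*s^2/9 = 0 := by
    have h : (c^2+e^2+f^2 - s/3*f - 2*s^2/9)^2 = 0 := by
      linarith [key, sq_nonneg (c^2+e^2+f^2 - s/3*f - 2*s^2/9), sq_nonneg (a^2+b^2+c^2 - s/3*a - 2*s^2/9),
        sq_nonneg (b^2+d^2+e^2 - s/3*d - 2*s^2/9), sq_nonneg (a*b+b*d+c*e - s/3*b),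
        sq_nonneg (a*c+b*e+c*f - s/3*c), sq_nonneg (b*c+d*e+e*f - s/3*e)]
    exact pow_eq_zero_iff two_ne_zero |>.mp h
  have hB01 : a*b+b*d+c*e - s/3*b = 0 := by
    have h : (a*b+b*d+c*e - s/3*b)^2 = 0 := by
      linarith [key, sq_nonneg (a*b+b*d+c*e - s/3*b), sq_nonneg (a^2+b^2+c^2 - s/3*a - 2*s^2/9),
        sq_nonneg (b^2+d^2+e^2 - s/3*d - 2*s^2/9),
        sq_nonneg (c^2+e^2+f^2 - s/3*f - 2*s^2/9),
        sq_nonneg (a*c+b*e+c*f - s/3*c), sq_nonneg (b*c+d*e+e*f - s/3*e)]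
    exact pow_eq_zero_iff two_ne_zero |>.mp h
  have hB02 : a*c+b*e+c*f - s/3*c = 0 := by
    have h : (a*c+b*e+c*f - s/3*c)^2 = 0 := by
      linarith [key, sq_nonneg (a*c+b*e+c*f - s/3*c), sq_nonneg (a^2+b^2+c^2 - s/3*a - 2*s^2/9),
        sq_nonneg (b^2+d^2+e^2 - s/3*d - 2*s^2/9),
        sq_nonneg (c^2+e^2+f^2 - s/3*f - 2*s^2/9),
        sq_nonneg (a*b+b*d+c*e - s/3*b), sq_nonneg (b*c+d*e+e*f - s/3*e)]
    exact pow_eq_zero_iff two_ne_zero |>.mp h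
  have hB12 : b*c+d*e+e*f - s/3*e = 0 := by
    have h : (b*c+d*e+e*f - s/3*e)^2 = 0 := by
      linarith [key, sq_nonneg (b*c+d*e+e*f - s/3*e), sq_nonneg (a^2+b^2+c^2 - s/3*a - 2*s^2/9),
        sq_nonneg (b^2+d^2+e^2 - s/3*d - 2*s^2/9),
        sq_nonneg (c^2+e^2+f^2 - s/3*f - 2*s^2/9),
        sq_nonneg (a*b+b*d+c*e - s/3*b), sq_nonneg (a*c+b*e+c*f - s/3*c)]
    exact pow_eq_zero_iff two_ne_zero |>.mp h
  -- A = Q + (s/3) I satisfies A^2 = s A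
  have hE00 : (a+s/3)^2 + b^2 + c^2 = s*(a+s/3) := by linear_combination hB00
  have hE01 : (a+s/3)*b + b*(d+s/3) + c*e = s*b := by linear_combination hB01
  have hE02 : (a+s/3)*c + b*e + c*(f+s/3) = s*c := by linear_combination hB02
  have hE11 : b^2 + (d+s/3)^2 + e^2 = s*(d+s/3) := by linear_combination hB11
  have hE12 : b*c + (d+s/3)*e + e*(f+s/3) = s*e := by linear_combination hB12
  have hE22 : c^2 + e^2 + (f+s/3)^2 = s*(f+s/3) := by linear_combination hB22
  -- all 2x2 minors of A vanish
  have key2 : ((a+s/3)*(d+s/3) - b*b)^2 + ((a+s/3)*(f+s/3) - c*c)^2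
      + ((d+s/3)*(f+s/3) - e*e)^2 + 2*((a+s/3)*e - b*c)^2
      + 2*(b*e - c*(d+s/3))^2 + 2*(b*(f+s/3) - c*e)^2 = 0 := by
    linear_combination
      ((b^2+(d+s/3)^2+e^2) + (c^2+e^2+(f+s/3)^2)) * hE00
      + (s*(a+s/3) + (c^2+e^2+(f+s/3)^2)) * hE11
      + (s*(a+s/3) + s*(d+s/3)) * hE22
      - (((a+s/3)*b + b*(d+s/3) + c*e) + s*b) * hE01
      - (((a+s/3)*c + b*e + c*(f+s/3)) + s*c) * hE02
      - ((b*c + (d+s/3)*e + e*(f+s/3)) + s*e) * hE12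
      + (s^2*(a+d+f)/2 + 2*s^3/3) * H1 - s^2/2 * H2
  have hm1 : (a+s/3)*(d+s/3) = b^2 := by
    have h : ((a+s/3)*(d+s/3) - b*b)^2 = 0 := by
      linarith [key2, sq_nonneg ((a+s/3)*(d+s/3) - b*b), sq_nonneg ((a+s/3)*(f+s/3) - c*c), sq_nonneg ((d+s/3)*(f+s/3) - e*e),
        sq_nonneg ((a+s/3)*e - b*c), sq_nonneg (b*e - c*(d+s/3)),
        sq_nonneg (b*(f+s/3) - c*e)]
    have := pow_eq_zero_iff two_ne_zero |>.mp h
    linear_combination this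
  have hm2 : (a+s/3)*(f+s/3) = c^2 := by
    have h : ((a+s/3)*(f+s/3) - c*c)^2 = 0 := by
      linarith [key2, sq_nonneg ((a+s/3)*(f+s/3) - c*c), sq_nonneg ((a+s/3)*(d+s/3) - b*b), sq_nonneg ((d+s/3)*(f+s/3) - e*e),
        sq_nonneg ((a+s/3)*e - b*c), sq_nonneg (b*e - c*(d+s/3)),
        sq_nonneg (b*(f+s/3) - c*e)]
    have := pow_eq_zero_iff two_ne_zero |>.mp h
    linear_combination this
  have hm3 : (d+s/3)*(f+s/3) = e^2 := by
    have h : ((d+s/3)*(f+s/3) - e*e)^2 = 0 := by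
      linarith [key2, sq_nonneg ((d+s/3)*(f+s/3) - e*e), sq_nonneg ((a+s/3)*(d+s/3) - b*b), sq_nonneg ((a+s/3)*(f+s/3) - c*c),
        sq_nonneg ((a+s/3)*e - b*c), sq_nonneg (b*e - c*(d+s/3)),
        sq_nonneg (b*(f+s/3) - c*e)]
    have := pow_eq_zero_iff two_ne_zero |>.mp h
    linear_combination this
  have hu : (a+s/3)*e = b*c := by
    have h : ((a+s/3)*e - b*c)^2 = 0 := by
      linarith [key2, sq_nonneg ((a+s/3)*e - b*c), sq_nonneg ((a+s/3)*(d+s/3) - b*b), sq_nonneg ((a+s/3)*(f+s/3) - c*c),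
        sq_nonneg ((d+s/3)*(f+s/3) - e*e), sq_nonneg (b*e - c*(d+s/3)),
        sq_nonneg (b*(f+s/3) - c*e)]
    have := pow_eq_zero_iff two_ne_zero |>.mp h
    linear_combination this
  have hv : (d+s/3)*c = b*e := by
    have h : (b*e - c*(d+s/3))^2 = 0 := by
      linarith [key2, sq_nonneg (b*e - c*(d+s/3)), sq_nonneg ((a+s/3)*(d+s/3) - b*b), sq_nonneg ((a+s/3)*(f+s/3) - c*c),
        sq_nonneg ((d+s/3)*(f+s/3) - e*e), sq_nonneg ((a+s/3)*e - b*c),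
        sq_nonneg (b*(f+s/3) - c*e)]
    have := pow_eq_zero_iff two_ne_zero |>.mp h
    linear_combination -this
  have hw : (f+s/3)*b = c*e := by
    have h : (b*(f+s/3) - c*e)^2 = 0 := by
      linarith [key2, sq_nonneg (b*(f+s/3) - c*e), sq_nonneg ((a+s/3)*(d+s/3) - b*b), sq_nonneg ((a+s/3)*(f+s/3) - c*c),
        sq_nonneg ((d+s/3)*(f+s/3) - e*e), sq_nonneg ((a+s/3)*e - b*c),
        sq_nonneg (b*e - c*(d+s/3))]
    have := pow_eq_zero_iff two_ne_zero |>.mp h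
    linear_combination this
  -- one diagonal entry of A is positive
  have hcases : 0 < a + s/3 ∨ 0 < d + s/3 ∨ 0 < f + s/3 := by
    by_contra hcon
    push_neg at hcon
    obtain ⟨u1, u2, u3⟩ := hcon
    linarith
  rcases hcases with hpos | hpos | hpos
  · obtain ⟨x, y, z, hsum, p00, p01, p02, p11, p12, p22⟩ :=
      rankone s (a+s/3) (d+s/3) (f+s/3) b c e hs hpos hE00 hm1 hm2 hu
    exact assemble s Q sy10 sy20 sy21 x y z hsum
      (by linear_combination p00) (by linear_combination p01) (by linear_combination p02)
      (by linear_combination p11) (by linear_combination p12) (by linear_combination p22)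
  · obtain ⟨x, y, z, hsum, p00, p01, p02, p11, p12, p22⟩ :=
      rankone s (d+s/3) (a+s/3) (f+s/3) b e c hs hpos
        (by linear_combination hE11) (by linear_combination hm1)
        (by linear_combination hm3) (by linear_combination hv)
    exact assemble s Q sy10 sy20 sy21 y x z (by linarith)
      (by linear_combination p11) (by linear_combination p01) (by linear_combination p12)
      (by linear_combination p00) (by linear_combination p02) (by linear_combination p22)
  · obtain ⟨x, y, z, hsum, p00, p01, p02, p11, p12, p22⟩ :=
      rankone s (f+s/3) (a+s/3) (d+s/3) c e b hs hpos
        (by linear_combination hE22) (by linear_combination hm2)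
        (by linear_combination hm3) (by linear_combination hw)
    exact assemble s Q sy10 sy20 sy21 y z x (by linarith)
      (by linear_combination p11) (by linear_combination p12) (by linear_combination p01)
      (by linear_combination p22) (by linear_combination p02) (by linear_combination p00)
end

section
/- Let s₊ > 0 and Q = s₊(n ⊗ n − (1/3)I) for a unit vector n ∈ ℝ³. Then Q satisfies the quadratic equation Q² − (1/3)s₊ Q − (2/9)s₊² I = 0, and conversely any 3×3 real symmetric traceless matrix satisfying this equation is of that form for some unit vector n. -/
open Matrix

private lemma case_pos (a b c p q r : ℝ) (ha : 0 < a)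
    (e00 : a^2 + p^2 + q^2 = a) (hab : a*b = p^2) (hac : a*c = q^2) (hra : r*a = p*q) :
    ∃ n0 n1 n2 : ℝ, n0^2 + n1^2 + n2^2 = 1 ∧ a = n0*n0 ∧ b = n1*n1 ∧ c = n2*n2 ∧
      p = n0*n1 ∧ q = n0*n2 ∧ r = n1*n2 := by
  have ha' : a ≠ 0 := ne_of_gt ha
  have ht : Real.sqrt a * Real.sqrt a = a := Real.mul_self_sqrt ha.le
  have htne : Real.sqrt a ≠ 0 := by positivity
  refine ⟨Real.sqrt a, p / Real.sqrt a, q / Real.sqrt a, ?_, ?_, ?_, ?_, ?_, ?_, ?_⟩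
  · field_simp
    nlinarith [e00, ht]
  · exact ht.symm
  · field_simp
    nlinarith [hab, ht]
  · field_simp
    nlinarith [hac, ht]
  · field_simp
  · field_simp
  · field_simp
    rw [Real.sq_sqrt ha.le]; linarith

private lemma aux_real (a b c p q r : ℝ)
    (htr : a + b + c = 1)
    (e00 : a^2 + p^2 + q^2 = a)
    (e11 : p^2 + b^2 + r^2 = b)
    (e22 : q^2 + r^2 + c^2 = c)
    (e01 : a*p + p*b + q*r = p)
    (e02 : a*q + p*r + q*c = q)
    (e12 : p*q + b*r + r*c = r) :
    ∃ n0 n1 n2 : ℝ, n0^2 + n1^2 + n2^2 = 1 ∧ a = n0*n0 ∧ b = n1*n1 ∧ c = n2*n2 ∧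
      p = n0*n1 ∧ q = n0*n2 ∧ r = n1*n2 := by
  have hab : a*b = p^2 := by
    linear_combination ((a + b - c)/2) * htr - e00/2 - e11/2 + e22/2
  have hac : a*c = q^2 := by
    linear_combination ((a + c - b)/2) * htr - e00/2 + e11/2 - e22/2
  have hbc : b*c = r^2 := by
    linear_combination ((b + c - a)/2) * htr + e00/2 - e11/2 - e22/2
  have hra : r*a = p*q := by linear_combination r*htr - e12
  have hqb : q*b = p*r := by linear_combination q*htr - e02
  have hpc : p*c = q*r := by linear_combination p*htr - e01
  have ha0 : 0 ≤ a := by nlinarith [sq_nonneg a, sq_nonneg p, sq_nonneg q]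
  have hb0 : 0 ≤ b := by nlinarith [sq_nonneg b, sq_nonneg p, sq_nonneg r]
  have hc0 : 0 ≤ c := by nlinarith [sq_nonneg c, sq_nonneg q, sq_nonneg r]
  rcases lt_or_eq_of_le ha0 with ha | ha
  · exact case_pos a b c p q r ha e00 hab hac hra
  · rcases lt_or_eq_of_le hb0 with hb | hb
    · obtain ⟨m0, m1, m2, hsum, hb', ha', hc', hp', hr', hq'⟩ :=
        case_pos b a c p r q hb (by linarith) (by linarith [hab]) hbc
          (by linear_combination hqb)
      exact ⟨m1, m0, m2, by linarith, ha', hb', hc', by linarith [hp', mul_comm m0 m1],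
        hq', by linarith [hr', mul_comm m0 m2]⟩
    · have hc : 0 < c := by linarith
      obtain ⟨m0, m1, m2, hsum, hc', ha', hb', hq', hr', hp'⟩ :=
        case_pos c a b q r p hc (by linarith) (by linarith [hac]) (by linarith [hbc])
          (by linear_combination hpc)
      exact ⟨m1, m2, m0, by linarith, ha', hb', hc', hp',
        by linarith [hq', mul_comm m0 m1], by linarith [hr', mul_comm m0 m2]⟩

theorem stmt_2 (s : ℝ) (hs : 0 < s) :
    (∀ n : Fin 3 → ℝ, (∑ i, n i ^ 2 = 1) →
      ∀ Q : Matrix (Fin 3) (Fin 3) ℝ,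
        Q = s • (vecMulVec n n - (3 : ℝ)⁻¹ • (1 : Matrix (Fin 3) (Fin 3) ℝ)) →
        Q * Q - ((3 : ℝ)⁻¹ * s) • Q - (2 / 9 * s ^ 2) • (1 : Matrix (Fin 3) (Fin 3) ℝ) = 0) ∧
    (∀ Q : Matrix (Fin 3) (Fin 3) ℝ, Q.IsSymm → Q.trace = 0 →
      Q * Q - ((3 : ℝ)⁻¹ * s) • Q - (2 / 9 * s ^ 2) • (1 : Matrix (Fin 3) (Fin 3) ℝ) = 0 →
      ∃ n : Fin 3 → ℝ, (∑ i, n i ^ 2 = 1) ∧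
        Q = s • (vecMulVec n n - (3 : ℝ)⁻¹ • (1 : Matrix (Fin 3) (Fin 3) ℝ))) := by
  constructor
  · intro n hn Q hQ
    rw [Fin.sum_univ_three] at hn
    subst hQ
    ext i j
    fin_cases i <;> fin_cases j <;>
      simp [Matrix.mul_apply, Matrix.vecMulVec_apply, Fin.sum_univ_three, Matrix.one_apply,
        Matrix.sub_apply, Matrix.smul_apply, smul_eq_mul]
    · linear_combination (s^2 * n 0 * n 0) * hn
    · linear_combination (s^2 * n 0 * n 1) * hn
    · linear_combination (s^2 * n 0 * n 2) * hn
    · linear_combination (s^2 * n 1 * n 0) * hn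
    · linear_combination (s^2 * n 1 * n 1) * hn
    · linear_combination (s^2 * n 1 * n 2) * hn
    · linear_combination (s^2 * n 2 * n 0) * hn
    · linear_combination (s^2 * n 2 * n 1) * hn
    · linear_combination (s^2 * n 2 * n 2) * hn
  · intro Q hsym htr h
    have hs' : s ≠ 0 := ne_of_gt hs
    have s10 : Q 1 0 = Q 0 1 := by rw [← hsym.apply]
    have s20 : Q 2 0 = Q 0 2 := by rw [← hsym.apply]
    have s21 : Q 2 1 = Q 1 2 := by rw [← hsym.apply]
    rw [Matrix.trace_fin_three] at htr
    have h00 := congrFun (congrFun h 0) 0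
    have h11 := congrFun (congrFun h 1) 1
    have h22 := congrFun (congrFun h 2) 2
    have h01 := congrFun (congrFun h 0) 1
    have h02 := congrFun (congrFun h 0) 2
    have h12 := congrFun (congrFun h 1) 2
    simp [Matrix.mul_apply, Fin.sum_univ_three, Matrix.one_apply, Matrix.sub_apply,
      Matrix.smul_apply, smul_eq_mul] at h00 h11 h22 h01 h02 h12
    simp only [s10, s20, s21] at h00 h11 h22 h01 h02 h12
    obtain ⟨n0, n1, n2, hsum, hA, hB, hC, hP, hQ2, hR⟩ :=
      aux_real (Q 0 0/s + 3⁻¹) (Q 1 1/s + 3⁻¹) (Q 2 2/s + 3⁻¹) (Q 0 1/s) (Q 0 2/s) (Q 1 2/s)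
        (by field_simp; linarith)
        (by field_simp; linear_combination 9 * h00)
        (by field_simp; linear_combination 9 * h11)
        (by field_simp; linear_combination 9 * h22)
        (by field_simp; linear_combination 3 * h01)
        (by field_simp; linear_combination 3 * h02)
        (by field_simp; linear_combination 3 * h12)
    refine ⟨![n0, n1, n2], by simpa [Fin.sum_univ_three] using hsum, ?_⟩
    ext i j
    fin_cases i <;> fin_cases j <;>
      simp [Matrix.vecMulVec_apply, Matrix.one_apply, Matrix.sub_apply, Matrix.smul_apply,
        smul_eq_mul]
    · field_simp at hA; linear_combination hA/3
    · field_simp at hP; linear_combination hP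
    · field_simp at hQ2; linear_combination hQ2
    · field_simp at hP; linear_combination s10 + hP
    · field_simp at hB; linear_combination hB/3
    · field_simp at hR; linear_combination hR
    · field_simp at hQ2; linear_combination s20 + hQ2
    · field_simp at hR; linear_combination s21 + hR
    · field_simp at hC; linear_combination hC/3
end

section
/- Let s₊ > 0, n ∈ ℝ³ a unit vector, and Q = s₊(n ⊗ n − (1/3)I). A 3×3 real symmetric matrix Ẋ satisfies (1/3)s₊ Ẋ = ẊQ + QẊ if and only if Ẋ = n ⊗ v + v ⊗ n for some vector v ∈ ℝ³ orthogonal to n. -/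
open Matrix

theorem stmt_3 (s : ℝ) (hs : 0 < s) (n : Fin 3 → ℝ) (hn : ∑ i, n i ^ 2 = 1)
    (Q : Matrix (Fin 3) (Fin 3) ℝ)
    (hQ : Q = s • (vecMulVec n n - (3 : ℝ)⁻¹ • (1 : Matrix (Fin 3) (Fin 3) ℝ)))
    (X : Matrix (Fin 3) (Fin 3) ℝ) (hX : X.IsSymm) :
    ((3 : ℝ)⁻¹ * s) • X = X * Q + Q * X ↔
      ∃ v : Fin 3 → ℝ, (∑ i, v i * n i = 0) ∧ X = vecMulVec n v + vecMulVec v n := by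
  have hXs : ∀ i j, X j i = X i j := fun i j => hX.apply i j
  set P : Matrix (Fin 3) (Fin 3) ℝ := vecMulVec n n with hP
  have key : (((3:ℝ)⁻¹ * s) • X = X * Q + Q * X) ↔ X = X * P + P * X := by
    rw [hQ]
    have e1 : X * (s • (P - (3:ℝ)⁻¹ • 1)) + (s • (P - (3:ℝ)⁻¹ • 1)) * X
        = s • (X * P + P * X) - ((2/3 : ℝ) * s) • X := by
      simp only [Matrix.mul_smul, Matrix.smul_mul, Matrix.mul_sub, Matrix.sub_mul,
        Matrix.mul_one, Matrix.one_mul, smul_sub, smul_smul]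
      module
    rw [e1]
    constructor
    · intro h
      have h2 : s • X = s • (X * P + P * X) := by
        have h3 : ((3:ℝ)⁻¹ * s) • X + ((2/3:ℝ) * s) • X = s • (X * P + P * X) := by
          rw [h]; module
        calc s • X = ((3:ℝ)⁻¹ * s) • X + ((2/3:ℝ) * s) • X := by module
          _ = s • (X * P + P * X) := h3
      exact smul_right_injective _ (ne_of_gt hs) h2
    · intro h; rw [← h]; module
  rw [key]
  have hXP : ∀ i j, (X * P) i j = (∑ k, X i k * n k) * n j := by
    intro i j
    simp only [Matrix.mul_apply, hP, vecMulVec_apply, Finset.sum_mul]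
    apply Finset.sum_congr rfl; intro k _; ring
  have hPX : ∀ i j, (P * X) i j = n i * (∑ k, X j k * n k) := by
    intro i j
    simp only [Matrix.mul_apply, hP, vecMulVec_apply, Finset.mul_sum]
    apply Finset.sum_congr rfl; intro k _; rw [hXs k j]; ring
  constructor
  · intro h
    set v : Fin 3 → ℝ := fun i => ∑ k, X i k * n k with hv
    have hE : ∀ i j, X i j = v i * n j + n i * v j := by
      intro i j
      conv_lhs => rw [h]
      simp only [Matrix.add_apply, hXP, hPX]
      rfl
    have h1 : ∀ i, v i = v i + (∑ j, v j * n j) * n i := by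
      intro i
      calc v i = ∑ k, X i k * n k := rfl
        _ = ∑ k, (v i * n k + n i * v k) * n k := by
            apply Finset.sum_congr rfl; intro k _; rw [← hE i k]
        _ = v i * (∑ k, n k ^ 2) + n i * (∑ k, v k * n k) := by
            rw [Finset.mul_sum, Finset.mul_sum, ← Finset.sum_add_distrib]
            apply Finset.sum_congr rfl; intro k _; ring
        _ = v i + (∑ j, v j * n j) * n i := by rw [hn]; ring
    have h2 : ∀ i, (∑ j, v j * n j) * n i = 0 := fun i => by linarith [h1 i]
    have hv0 : ∑ j, v j * n j = 0 := by
      have h3 : (∑ j, v j * n j) * (∑ i, n i ^ 2) = 0 := by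
        rw [Finset.mul_sum]
        apply Finset.sum_eq_zero; intro i _
        calc (∑ j, v j * n j) * n i ^ 2 = ((∑ j, v j * n j) * n i) * n i := by ring
          _ = 0 := by rw [h2 i]; ring
      rwa [hn, mul_one] at h3
    refine ⟨v, hv0, ?_⟩
    ext i j
    simp only [Matrix.add_apply, vecMulVec_apply]
    rw [hE i j]; ring
  · rintro ⟨v, hv, rfl⟩
    ext i j
    simp only [Matrix.add_apply, vecMulVec_apply, hXP, hPX]
    have hvi : ∀ i, ∑ x, (n i * v x + v i * n x) * n x = v i := by
      intro i
      have e : ∑ x, (n i * v x + v i * n x) * n x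
          = n i * (∑ x, v x * n x) + v i * (∑ x, n x ^ 2) := by
        rw [Finset.mul_sum, Finset.mul_sum, ← Finset.sum_add_distrib]
        apply Finset.sum_congr rfl; intro k _; ring
      rw [e, hv, hn]; ring
    rw [hvi i, hvi j]
    ring
end

section
/- Let s₊ > 0, n ∈ ℝ³ a unit vector, and Q = s₊(n ⊗ n − (1/3)I). A 3×3 real symmetric matrix P commutes with Q if and only if P is orthogonal (with respect to the Frobenius inner product tr(AB)) to every matrix of the form n ⊗ v + v ⊗ n with v ⊥ n. -/
open Matrix

theorem stmt_4 (s : ℝ) (hs : 0 < s) (n : Fin 3 → ℝ) (hn : ∑ i, n i ^ 2 = 1)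
    (Q : Matrix (Fin 3) (Fin 3) ℝ)
    (hQ : Q = s • (vecMulVec n n - (3 : ℝ)⁻¹ • (1 : Matrix (Fin 3) (Fin 3) ℝ)))
    (P : Matrix (Fin 3) (Fin 3) ℝ) (hP : P.IsSymm) :
    P * Q = Q * P ↔
      ∀ v : Fin 3 → ℝ, (∑ i, v i * n i = 0) →
        (P * (vecMulVec n v + vecMulVec v n)).trace = 0 := by
  have hsymm : ∀ i j, P i j = P j i := fun i j => by simpa using congrFun (congrFun hP j) i
  set w : Fin 3 → ℝ := P.mulVec n with hw
  have hwdef : ∀ i, w i = ∑ j, P i j * n j := fun i => rfl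
  have hMP : ∀ i j, (P * vecMulVec n n) i j = w i * n j := by
    intro i j
    rw [Matrix.mul_apply, hwdef, Finset.sum_mul]
    exact Finset.sum_congr rfl fun k _ => by rw [vecMulVec_apply]; ring
  have hPM : ∀ i j, (vecMulVec n n * P) i j = n i * w j := by
    intro i j
    rw [Matrix.mul_apply, hwdef, Finset.mul_sum]
    refine Finset.sum_congr rfl fun k _ => ?_
    rw [vecMulVec_apply, hsymm j k]; ring
  have hcomm : (P * Q = Q * P) ↔ ∀ i j, w i * n j = n i * w j := by
    subst hQ
    rw [Matrix.mul_smul, Matrix.smul_mul,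
      (smul_right_injective (Matrix (Fin 3) (Fin 3) ℝ) hs.ne').eq_iff,
      Matrix.mul_sub, Matrix.sub_mul, Matrix.mul_smul, Matrix.smul_mul,
      Matrix.mul_one, Matrix.one_mul, sub_left_inj, ← Matrix.ext_iff]
    exact forall₂_congr fun i j => by rw [hMP, hPM]
  have htr : ∀ v : Fin 3 → ℝ,
      (P * (vecMulVec n v + vecMulVec v n)).trace = 2 * ∑ i, v i * w i := by
    intro v
    have h1 : (P * vecMulVec n v).trace = ∑ i, v i * w i := by
      simp only [Matrix.trace, Matrix.diag, Matrix.mul_apply, vecMulVec_apply]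
      refine Finset.sum_congr rfl fun i _ => ?_
      rw [hwdef, Finset.mul_sum]
      exact Finset.sum_congr rfl fun k _ => by ring
    have h2 : (P * vecMulVec v n).trace = ∑ i, v i * w i := by
      simp only [Matrix.trace, Matrix.diag, Matrix.mul_apply, vecMulVec_apply]
      rw [Finset.sum_comm]
      refine Finset.sum_congr rfl fun k _ => ?_
      rw [hwdef, Finset.mul_sum]
      refine Finset.sum_congr rfl fun i _ => ?_
      rw [hsymm k i]; ring
    rw [Matrix.mul_add, Matrix.trace_add, h1, h2]; ring
  rw [hcomm]
  constructor
  · intro h v hv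
    rw [htr]
    have hc : ∀ i, w i = (∑ j, n j * w j) * n i := by
      intro i
      calc w i = w i * ∑ j, n j ^ 2 := by rw [hn, mul_one]
        _ = ∑ j, n j * (w i * n j) := by
            rw [Finset.mul_sum]; exact Finset.sum_congr rfl fun j _ => by ring
        _ = ∑ j, n j * (n i * w j) := Finset.sum_congr rfl fun j _ => by rw [h]
        _ = (∑ j, n j * w j) * n i := by
            rw [Finset.sum_mul]; exact Finset.sum_congr rfl fun j _ => by ring
    have : ∑ i, v i * w i = (∑ j, n j * w j) * ∑ i, v i * n i := by
      rw [Finset.mul_sum]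
      exact Finset.sum_congr rfl fun i _ => by rw [hc i]; ring
    rw [this, hv]; ring
  · intro h i j
    set c := ∑ k, n k * w k with hc
    have hv : ∑ k, (w k - c * n k) * n k = 0 := by
      have : ∑ k, (w k - c * n k) * n k = (∑ k, n k * w k) - c * ∑ k, n k ^ 2 := by
        rw [Finset.mul_sum, ← Finset.sum_sub_distrib]
        exact Finset.sum_congr rfl fun k _ => by ring
      rw [this, hn, ← hc]; ring
    have h0 := h (fun k => w k - c * n k) hv
    rw [htr] at h0
    have hsq : ∑ k, (w k - c * n k) ^ 2 = 0 := by
      have expand : ∑ k, (w k - c * n k) ^ 2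
          = (∑ k, (w k - c * n k) * w k) - c * ∑ k, (w k - c * n k) * n k := by
        rw [Finset.mul_sum, ← Finset.sum_sub_distrib]
        exact Finset.sum_congr rfl fun k _ => by ring
      rw [expand, hv]
      linarith
    have hall : ∀ k, w k = c * n k := by
      intro k
      have hk := (Finset.sum_eq_zero_iff_of_nonneg
        (fun k _ => sq_nonneg (w k - c * n k))).mp hsq k (Finset.mem_univ k)
      have := pow_eq_zero_iff (n := 2) (by norm_num) |>.mp hk
      linarith [sub_eq_zero.mp this]
    rw [hall i, hall j]; ring
end

section
/- Let s₊ > 0, n ∈ ℝ³ a unit vector, Q = s₊(n ⊗ n − (1/3)I), and let Ẋ be in the tangent space T_Q S₊ (i.e. (1/3)s₊ Ẋ = ẊQ + QẊ, Ẋ symmetric). Then 9 Q Ẋ Q = −2 s₊² Ẋ. -/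
open Matrix

theorem stmt_5 (s : ℝ) (hs : 0 < s) (n : Fin 3 → ℝ) (hn : ∑ i, n i ^ 2 = 1)
    (Q : Matrix (Fin 3) (Fin 3) ℝ)
    (hQ : Q = s • (vecMulVec n n - (3 : ℝ)⁻¹ • (1 : Matrix (Fin 3) (Fin 3) ℝ)))
    (X : Matrix (Fin 3) (Fin 3) ℝ) (hX : X.IsSymm)
    (hT : ((3 : ℝ)⁻¹ * s) • X = X * Q + Q * X) :
    (9 : ℝ) • (Q * X * Q) = (-2 * s ^ 2) • X := by
  have hs' : s ≠ 0 := ne_of_gt hs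
  set P := vecMulVec n n with hP
  have hP2 : P * P = P := by
    ext i j
    simp only [mul_apply, hP, vecMulVec_apply]
    have h : ∀ k, n i * n k * (n k * n j) = n i * n j * n k ^ 2 := fun k => by ring
    simp_rw [h, ← Finset.mul_sum, hn, mul_one]
  have hQ' : Q = s • P - ((3:ℝ)⁻¹ * s) • 1 := by
    rw [hQ, smul_sub, smul_smul, mul_comm]
  have hkey : X * P + P * X = X := by
    apply smul_right_injective (Matrix (Fin 3) (Fin 3) ℝ) hs'
    have h := hT
    rw [hQ'] at h
    simp only [Matrix.mul_sub, Matrix.sub_mul, mul_smul_comm, smul_mul_assoc,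
      mul_one, one_mul] at h
    show s • (X * P + P * X) = s • X
    linear_combination (norm := module) -h
  have hx : X * P = X - P * X := by rw [eq_sub_iff_add_eq, hkey]
  have hPXP : P * X * P = 0 := by
    calc P * X * P = P * (X * P) := by rw [mul_assoc]
      _ = P * X - P * P * X := by rw [hx, Matrix.mul_sub, mul_assoc]
      _ = 0 := by rw [hP2]; simp
  have expand : Q * X * Q = (s^2) • (P * X * P) - ((3:ℝ)⁻¹ * s^2) • (P * X)
      - ((3:ℝ)⁻¹ * s^2) • (X * P) + ((9:ℝ)⁻¹ * s^2) • X := by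
    rw [hQ']
    simp only [Matrix.sub_mul, Matrix.mul_sub, mul_smul_comm, smul_mul_assoc,
      mul_one, one_mul, smul_smul]
    match_scalars <;> ring
  rw [expand, hPXP, smul_zero]
  have : ((3:ℝ)⁻¹ * s^2) • (P * X) + ((3:ℝ)⁻¹ * s^2) • (X * P) = ((3:ℝ)⁻¹ * s^2) • X := by
    rw [← smul_add, add_comm, hkey]
  calc (9:ℝ) • (0 - ((3:ℝ)⁻¹ * s^2) • (P * X) - ((3:ℝ)⁻¹ * s^2) • (X * P) + ((9:ℝ)⁻¹ * s^2) • X)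
      = (-9:ℝ) • (((3:ℝ)⁻¹ * s^2) • (P * X) + ((3:ℝ)⁻¹ * s^2) • (X * P)) + (9 * (9:ℝ)⁻¹ * s^2) • X := by
        module
    _ = (-9:ℝ) • (((3:ℝ)⁻¹ * s^2) • X) + (9 * (9:ℝ)⁻¹ * s^2) • X := by rw [this]
    _ = (-2 * s ^ 2) • X := by match_scalars; ring
end

section
/- Let s₊ > 0, Q = s₊(n ⊗ n − (1/3)I) for a unit vector n ∈ ℝ³, and let A be any 3×3 real symmetric matrix. Define A^⊥ = −(2/s₊²)((1/3)s₊ A − QA − AQ)(Q − (1/6)s₊ I). Then A^⊥ commutes with Q, A − A^⊥ satisfies (1/3)s₊(A − A^⊥) = (A − A^⊥)Q + Q(A − A^⊥), and A^⊥ also equals −(2/s₊²)(Q − (1/6)s₊ I)((1/3)s₊ A − QA − AQ). -/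
open Matrix

theorem stmt_6 (s : ℝ) (hs : 0 < s) (n : Fin 3 → ℝ) (hn : ∑ i, n i ^ 2 = 1)
    (Q : Matrix (Fin 3) (Fin 3) ℝ)
    (hQ : Q = s • (vecMulVec n n - (3 : ℝ)⁻¹ • (1 : Matrix (Fin 3) (Fin 3) ℝ)))
    (A : Matrix (Fin 3) (Fin 3) ℝ) (hA : A.IsSymm)
    (Aperp : Matrix (Fin 3) (Fin 3) ℝ)
    (hAperp : Aperp = (-(2 / s ^ 2)) • ((((3 : ℝ)⁻¹ * s) • A - Q * A - A * Q) *
      (Q - ((6 : ℝ)⁻¹ * s) • (1 : Matrix (Fin 3) (Fin 3) ℝ)))) :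
    Aperp * Q = Q * Aperp ∧
    ((3 : ℝ)⁻¹ * s) • (A - Aperp) = (A - Aperp) * Q + Q * (A - Aperp) ∧
    Aperp = (-(2 / s ^ 2)) • ((Q - ((6 : ℝ)⁻¹ * s) • (1 : Matrix (Fin 3) (Fin 3) ℝ)) *
      (((3 : ℝ)⁻¹ * s) • A - Q * A - A * Q)) := by
  have hs0 : s ≠ 0 := ne_of_gt hs
  set P : Matrix (Fin 3) (Fin 3) ℝ := vecMulVec n n with hPdef
  have hPP : P * P = P := by
    ext i j
    simp only [hPdef, Matrix.mul_apply, Matrix.vecMulVec_apply]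
    have h : ∀ k, n i * n k * (n k * n j) = (n i * n j) * n k ^ 2 := fun k => by ring
    simp_rw [h]
    rw [← Finset.mul_sum, hn, mul_one]
  set M : Matrix (Fin 3) (Fin 3) ℝ := Q - ((6 : ℝ)⁻¹ * s) • 1 with hMdef
  have hQM : Q = M + ((6 : ℝ)⁻¹ * s) • (1 : Matrix (Fin 3) (Fin 3) ℝ) := by
    rw [hMdef]; abel
  have hMP : M = s • P - ((2 : ℝ)⁻¹ * s) • (1 : Matrix (Fin 3) (Fin 3) ℝ) := by
    rw [hMdef, hQ]; module
  have hMM : M * M = ((4 : ℝ)⁻¹ * s ^ 2) • (1 : Matrix (Fin 3) (Fin 3) ℝ) := by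
    rw [hMP]
    simp only [sub_mul, mul_sub, smul_mul_assoc, mul_smul_comm, smul_smul, hPP,
      Matrix.mul_one, Matrix.one_mul]
    module
  have hMMl : ∀ X : Matrix (Fin 3) (Fin 3) ℝ, M * (M * X) = ((4 : ℝ)⁻¹ * s ^ 2) • X := by
    intro X
    rw [← mul_assoc, hMM]; simp [smul_mul_assoc]
  have hAM : Aperp = (2 / s ^ 2) • (M * (A * M)) + (2 : ℝ)⁻¹ • A := by
    rw [hAperp, hQM]
    simp only [add_mul, mul_add, sub_mul, mul_sub, smul_mul_assoc, mul_smul_comm,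
      mul_assoc, hMM, hMMl, smul_smul, Matrix.mul_one, Matrix.one_mul, smul_sub, smul_add,
      neg_smul, neg_sub, sub_mul]
    match_scalars <;> field_simp <;> try ring
    all_goals tauto
  refine ⟨?_, ?_, ?_⟩
  · rw [hAM, hQM]
    simp only [add_mul, mul_add, smul_mul_assoc, mul_smul_comm, mul_assoc, hMM, hMMl,
      smul_smul, Matrix.mul_one, Matrix.one_mul]
    match_scalars <;> field_simp <;> try ring
    all_goals tauto
  · rw [hAM, hQM]
    simp only [sub_mul, mul_sub, add_mul, mul_add, smul_mul_assoc, mul_smul_comm,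
      mul_assoc, hMM, hMMl, smul_smul, Matrix.mul_one, Matrix.one_mul, smul_sub, smul_add]
    match_scalars <;> field_simp <;> try ring
    all_goals tauto
  · rw [hAM, hQM]
    simp only [add_mul, mul_add, sub_mul, mul_sub, smul_mul_assoc, mul_smul_comm,
      mul_assoc, hMM, hMMl, smul_smul, Matrix.mul_one, Matrix.one_mul, smul_sub, smul_add,
      neg_smul, neg_sub, add_sub_cancel]
    match_scalars <;> field_simp <;> try ring
    all_goals tauto
end

section
/- Let s₊ > 0, Q = s₊(n ⊗ n − (1/3)I) for a unit vector n, and let X, Y be 3×3 symmetric matrices with (1/3)s₊X = XQ + QX and (1/3)s₊Y = YQ + QY. Then XY + YX commutes with Q. -/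
open Matrix

theorem stmt_7 (s : ℝ) (hs : 0 < s) (n : Fin 3 → ℝ) (hn : ∑ i, n i ^ 2 = 1)
    (Q : Matrix (Fin 3) (Fin 3) ℝ)
    (hQ : Q = s • (vecMulVec n n - (3 : ℝ)⁻¹ • (1 : Matrix (Fin 3) (Fin 3) ℝ)))
    (X Y : Matrix (Fin 3) (Fin 3) ℝ) (hXs : X.IsSymm) (hYs : Y.IsSymm)
    (hX : ((3 : ℝ)⁻¹ * s) • X = X * Q + Q * X)
    (hY : ((3 : ℝ)⁻¹ * s) • Y = Y * Q + Q * Y) :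
    (X * Y + Y * X) * Q = Q * (X * Y + Y * X) := by
  have hs' : s ≠ 0 := ne_of_gt hs
  set P := vecMulVec n n with hP
  have hQ' : Q = s • P - ((3:ℝ)⁻¹ * s) • (1 : Matrix (Fin 3) (Fin 3) ℝ) := by
    rw [hQ, smul_sub, smul_smul, mul_comm]
  have keyX : X = X * P + P * X := by
    have h := hX
    rw [hQ'] at h
    simp only [Matrix.mul_sub, Matrix.sub_mul, mul_smul_comm, smul_mul_assoc,
      Matrix.mul_one, Matrix.one_mul] at h
    apply smul_right_injective (Matrix (Fin 3) (Fin 3) ℝ) hs'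
    linear_combination (norm := module) h
  have keyY : Y = Y * P + P * Y := by
    have h := hY
    rw [hQ'] at h
    simp only [Matrix.mul_sub, Matrix.sub_mul, mul_smul_comm, smul_mul_assoc,
      Matrix.mul_one, Matrix.one_mul] at h
    apply smul_right_injective (Matrix (Fin 3) (Fin 3) ℝ) hs'
    linear_combination (norm := module) h
  have hyp : Y * P = Y - P * Y := eq_sub_of_add_eq keyY.symm
  have hxp : X * P = X - P * X := eq_sub_of_add_eq keyX.symm
  have hpy : P * Y = Y - Y * P := eq_sub_of_add_eq (by rw [add_comm]; exact keyY.symm)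
  have hpx : P * X = X - X * P := eq_sub_of_add_eq (by rw [add_comm]; exact keyX.symm)
  have h2 : X * Y * P = P * (X * Y) := by
    rw [mul_assoc, hyp, ← mul_assoc P X Y, hpx]
    noncomm_ring
  have h3 : Y * X * P = P * (Y * X) := by
    rw [mul_assoc, hxp, ← mul_assoc P Y X, hpy]
    noncomm_ring
  rw [hQ']
  simp only [Matrix.mul_sub, Matrix.sub_mul, Matrix.add_mul, Matrix.mul_add,
    mul_smul_comm, smul_mul_assoc, Matrix.mul_one, Matrix.one_mul, h2, h3]
  module
end

section
/- Let s₊ > 0, Q = s₊(n ⊗ n − (1/3)I) for a unit vector n, and let X, Y be symmetric 3×3 matrices tangent to S₊ at Q. Then (XY + YX)Q = −(s₊/3)(XY + YX) + tr(XY) Q + (s₊/3) tr(XY) I. -/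
open Matrix

lemma aux_proj_sq (n : Fin 3 → ℝ) (hn : ∑ i, n i ^ 2 = 1) :
    vecMulVec n n * vecMulVec n n = vecMulVec n n := by
  ext i j
  simp only [mul_apply, vecMulVec_apply]
  calc ∑ x, n i * n x * (n x * n j) = ∑ x, n i * n j * n x ^ 2 :=
        Finset.sum_congr rfl (fun x _ => by ring)
    _ = n i * n j := by rw [← Finset.mul_sum, hn, mul_one]

lemma aux_pmp (n : Fin 3 → ℝ) (M : Matrix (Fin 3) (Fin 3) ℝ) :
    vecMulVec n n * M * vecMulVec n n = (vecMulVec n n * M).trace • vecMulVec n n := by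
  ext i j
  simp only [mul_apply, vecMulVec_apply, Matrix.smul_apply, trace, diag_apply, smul_eq_mul]
  calc ∑ x, (∑ l, n i * n l * M l x) * (n x * n j)
      = ∑ x, ∑ l, n i * n j * (n x * n l * M l x) :=
        Finset.sum_congr rfl fun x _ => by
          rw [Finset.sum_mul]; exact Finset.sum_congr rfl fun l _ => by ring
    _ = n i * n j * ∑ x, ∑ l, n x * n l * M l x := by simp_rw [← Finset.mul_sum]
    _ = (∑ x, ∑ l, n x * n l * M l x) * (n i * n j) := by ring

theorem stmt_10 (s : ℝ) (hs : 0 < s) (n : Fin 3 → ℝ) (hn : ∑ i, n i ^ 2 = 1)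
    (Q : Matrix (Fin 3) (Fin 3) ℝ)
    (hQ : Q = s • (vecMulVec n n - (3 : ℝ)⁻¹ • (1 : Matrix (Fin 3) (Fin 3) ℝ)))
    (X Y : Matrix (Fin 3) (Fin 3) ℝ) (hXs : X.IsSymm) (hYs : Y.IsSymm)
    (hX : ((3 : ℝ)⁻¹ * s) • X = X * Q + Q * X)
    (hY : ((3 : ℝ)⁻¹ * s) • Y = Y * Q + Q * Y) :
    (X * Y + Y * X) * Q = (-(s / 3)) • (X * Y + Y * X) + (X * Y).trace • Q +
      (s / 3 * (X * Y).trace) • (1 : Matrix (Fin 3) (Fin 3) ℝ) := by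
  set P : Matrix (Fin 3) (Fin 3) ℝ := vecMulVec n n with hPdef
  have hs' : s ≠ 0 := ne_of_gt hs
  have hP2 : P * P = P := by rw [hPdef]; exact aux_proj_sq n hn
  have hPMP : ∀ M : Matrix (Fin 3) (Fin 3) ℝ, P * M * P = (P * M).trace • P := by
    intro M; rw [hPdef]; exact aux_pmp n M
  -- tangency in projector form
  rw [hQ] at hX hY
  have hXP : X * P + P * X = X := by
    apply smul_right_injective _ hs'
    simp only [Matrix.mul_smul, Matrix.smul_mul, Matrix.mul_sub, Matrix.sub_mul,
      Matrix.mul_one, Matrix.one_mul, smul_sub, smul_smul] at hX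
    linear_combination (norm := module) -hX
  have hYP : Y * P + P * Y = Y := by
    apply smul_right_injective _ hs'
    simp only [Matrix.mul_smul, Matrix.smul_mul, Matrix.mul_sub, Matrix.sub_mul,
      Matrix.mul_one, Matrix.one_mul, smul_sub, smul_smul] at hY
    linear_combination (norm := module) -hY
  have hPXP : P * X * P = 0 := by
    have h := congrArg (fun M => P * M) hXP
    simp only [mul_add, ← mul_assoc] at h
    rw [hP2] at h
    exact add_eq_right.mp h
  have hPYP : P * Y * P = 0 := by
    have h := congrArg (fun M => P * M) hYP
    simp only [mul_add, ← mul_assoc] at h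
    rw [hP2] at h
    exact add_eq_right.mp h
  have hXYP : X * Y * P = P * (X * Y) * P := by
    calc X * Y * P = (X * P + P * X) * Y * P := by rw [hXP]
      _ = X * (P * Y * P) + P * (X * Y) * P := by noncomm_ring
      _ = P * (X * Y) * P := by rw [hPYP, mul_zero, zero_add]
  have hYXP : Y * X * P = P * (Y * X) * P := by
    calc Y * X * P = (Y * P + P * Y) * X * P := by rw [hYP]
      _ = Y * (P * X * P) + P * (Y * X) * P := by noncomm_ring
      _ = P * (Y * X) * P := by rw [hPXP, mul_zero, zero_add]
  have htr : (P * (X * Y)).trace + (P * (Y * X)).trace = (X * Y).trace := by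
    have h1 : (X * Y).trace = (X * P * Y).trace + (P * (X * Y)).trace := by
      calc (X * Y).trace = ((X * P + P * X) * Y).trace := by rw [hXP]
        _ = (X * P * Y).trace + (P * (X * Y)).trace := by
            rw [add_mul, trace_add, mul_assoc P X Y]
    have h2 : (X * P * Y).trace = (P * (Y * X)).trace := by
      rw [trace_mul_cycle, ← mul_assoc, trace_mul_cycle]
    rw [h1, h2]; ring
  have hKey : (X * Y + Y * X) * P = (X * Y).trace • P := by
    calc (X * Y + Y * X) * P = X * Y * P + Y * X * P := add_mul _ _ _
      _ = P * (X * Y) * P + P * (Y * X) * P := by rw [hXYP, hYXP]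
      _ = (P * (X * Y)).trace • P + (P * (Y * X)).trace • P := by rw [hPMP, hPMP]
      _ = (X * Y).trace • P := by rw [← add_smul, htr]
  rw [hQ, Matrix.mul_smul, Matrix.mul_sub, hKey, Matrix.mul_smul, Matrix.mul_one]
  module
end

section
/- Let s₊ > 0, Q = s₊(n ⊗ n − (1/3)I) for a unit vector n, and let X, Y be symmetric tangent vectors at Q (i.e. (1/3)s₊X = XQ + QX, similarly Y). Then −(2/s₊²) tr(XY) Q + (1/s₊)(XY + YX − (2/3)tr(XY) I) = −(1/s₊²)(XY + YX)(2Q − (1/3)s₊ I) = −(1/s₊²)(2Q − (1/3)s₊ I)(XY + YX). -/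
open Matrix

theorem stmt_13 (s : ℝ) (hs : 0 < s) (n : Fin 3 → ℝ) (hn : ∑ i, n i ^ 2 = 1)
    (Q : Matrix (Fin 3) (Fin 3) ℝ)
    (hQ : Q = s • (vecMulVec n n - (3 : ℝ)⁻¹ • (1 : Matrix (Fin 3) (Fin 3) ℝ)))
    (X Y : Matrix (Fin 3) (Fin 3) ℝ) (hXs : X.IsSymm) (hYs : Y.IsSymm)
    (hX : ((3 : ℝ)⁻¹ * s) • X = X * Q + Q * X)
    (hY : ((3 : ℝ)⁻¹ * s) • Y = Y * Q + Q * Y) :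
    (-(2 / s ^ 2) * (X * Y).trace) • Q +
        s⁻¹ • (X * Y + Y * X - (2 / 3 * (X * Y).trace) • (1 : Matrix (Fin 3) (Fin 3) ℝ)) =
      (-(1 / s ^ 2)) • ((X * Y + Y * X) *
        ((2 : ℝ) • Q - ((3 : ℝ)⁻¹ * s) • (1 : Matrix (Fin 3) (Fin 3) ℝ))) ∧
    (-(1 / s ^ 2)) • ((X * Y + Y * X) *
        ((2 : ℝ) • Q - ((3 : ℝ)⁻¹ * s) • (1 : Matrix (Fin 3) (Fin 3) ℝ))) =
      (-(1 / s ^ 2)) • (((2 : ℝ) • Q - ((3 : ℝ)⁻¹ * s) • (1 : Matrix (Fin 3) (Fin 3) ℝ)) *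
        (X * Y + Y * X)) := by
  set P : Matrix (Fin 3) (Fin 3) ℝ := vecMulVec n n with hPdef
  have hP2 : P * P = P := by
    ext i j
    simp only [hPdef, Matrix.mul_apply, vecMulVec_apply]
    have : ∀ k, n i * n k * (n k * n j) = (n i * n j) * n k ^ 2 := fun k => by ring
    rw [Finset.sum_congr rfl fun k _ => this k, ← Finset.mul_sum, hn, mul_one]
  have htrP : P.trace = 1 := by
    simp only [Matrix.trace, Matrix.diag, hPdef, vecMulVec_apply]
    rw [← hn]; exact Finset.sum_congr rfl fun i _ => (sq (n i)).symm
  -- tangency in terms of P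
  have key : ∀ Z : Matrix (Fin 3) (Fin 3) ℝ,
      ((3 : ℝ)⁻¹ * s) • Z = Z * Q + Q * Z → Z * P + P * Z = Z := by
    intro Z h
    rw [hQ] at h
    apply smul_right_injective (Matrix (Fin 3) (Fin 3) ℝ) hs.ne'
    simp only [smul_sub, Matrix.mul_sub, Matrix.sub_mul, Matrix.mul_smul,
      Matrix.smul_mul, Matrix.mul_one, Matrix.one_mul] at h ⊢
    ext i j
    have h' := congrFun (congrFun h i) j
    simp only [Matrix.smul_apply, Matrix.add_apply, Matrix.sub_apply, smul_eq_mul] at h' ⊢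
    linarith
  have hXP : X * P + P * X = X := key X hX
  have hYP : Y * P + P * Y = Y := key Y hY
  have hXP' : X * P = X - P * X := eq_sub_of_add_eq hXP
  have hYP' : Y * P = Y - P * Y := eq_sub_of_add_eq hYP
  have hPX' : P * X = X - X * P := eq_sub_of_add_eq (add_comm (X * P) (P * X) ▸ hXP)
  set M : Matrix (Fin 3) (Fin 3) ℝ := X * Y + Y * X with hMdef
  have hXYP : X * Y * P = P * (X * Y) := by
    rw [Matrix.mul_assoc, hYP', Matrix.mul_sub, ← Matrix.mul_assoc,
      ← Matrix.mul_assoc, hPX', Matrix.sub_mul]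
  have hYXP : Y * X * P = P * (Y * X) := by
    have hPY' : P * Y = Y - Y * P := eq_sub_of_add_eq (add_comm (Y * P) (P * Y) ▸ hYP)
    rw [Matrix.mul_assoc, hXP', Matrix.mul_sub, ← Matrix.mul_assoc,
      ← Matrix.mul_assoc, hPY', Matrix.sub_mul]
  have hMP : M * P = P * M := by
    rw [hMdef, Matrix.add_mul, Matrix.mul_add, hXYP, hYXP]
  set c : ℝ := n ⬝ᵥ M.mulVec n with hcdef
  have hPMP : P * M * P = c • P := by
    ext i j
    rw [hcdef]
    simp only [Matrix.mul_apply, Matrix.smul_apply, hPdef, vecMulVec_apply,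
      dotProduct, Matrix.mulVec, smul_eq_mul, Finset.sum_mul, Finset.mul_sum]
    rw [Finset.sum_comm]
    refine Finset.sum_congr rfl fun l _ => Finset.sum_congr rfl fun k _ => ?_
    ring
  have hMPc : M * P = c • P := by
    have : M * P = P * M * P := by
      rw [← hMP]
      conv_lhs => rw [← hP2]
      rw [← Matrix.mul_assoc, Matrix.mul_assoc M P P, hP2]
    rw [this, hPMP]
  set t : ℝ := (X * Y).trace with htdef
  have hct : c = t := by
    have h1 : (M * P).trace = c := by rw [hMPc, Matrix.trace_smul, htrP, smul_eq_mul, mul_one]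
    have h2 : (M * P).trace = t := by
      rw [hMdef, Matrix.add_mul, Matrix.trace_add, htdef]
      have h3 : X * Y = X * Y * P + X * P * Y := by
        conv_lhs => rw [← hYP]
        rw [Matrix.mul_add, Matrix.mul_assoc, Matrix.mul_assoc]
      have h4 : (Y * X * P).trace = (X * P * Y).trace := by
        rw [Matrix.mul_assoc, Matrix.trace_mul_comm]
      conv_rhs => rw [h3, Matrix.trace_add]
      rw [h4]
    rw [← h1, h2]
  have hMQ : M * Q = (s * t) • P - ((3 : ℝ)⁻¹ * s) • M := by
    rw [hQ, smul_sub, Matrix.mul_sub, Matrix.mul_smul, Matrix.mul_smul, hMPc,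
      Matrix.mul_smul, Matrix.mul_one, smul_smul, smul_smul, mul_comm s c, hct, mul_comm t s, mul_comm s (3:ℝ)⁻¹]
  have hQM : Q * M = (s * t) • P - ((3 : ℝ)⁻¹ * s) • M := by
    rw [hQ, smul_sub, Matrix.sub_mul, Matrix.smul_mul, Matrix.smul_mul, ← hMP, hMPc,
      Matrix.smul_mul, Matrix.one_mul, smul_smul, smul_smul, mul_comm s c, hct, mul_comm t s, mul_comm s (3:ℝ)⁻¹]
  constructor
  · rw [Matrix.mul_sub, Matrix.mul_smul, hMQ, Matrix.mul_smul, Matrix.mul_one, hQ]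
    match_scalars <;> field_simp <;> ring
  · rw [Matrix.mul_sub, Matrix.sub_mul, Matrix.mul_smul, Matrix.smul_mul,
      Matrix.mul_smul, Matrix.smul_mul, hMQ, hQM, Matrix.mul_one, Matrix.one_mul]
end

section
/- Define φ(x) = (sinh(√(a/L)|x|) · R)/(sinh(√(a/L)R) · |x|) on the ball B_R ⊂ ℝ³ (extended by its limit value √(a/L)R/sinh(√(a/L)R) at x = 0). Then φ is C² on B_R, satisfies −LΔφ + aφ = 0, equals 1 on ∂B_R, and for |x| ≤ R/2 satisfies φ(x) ≤ 2 exp(−√(a/L)·R/2). -/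
open Filter Topology

noncomputable def myc (k : ℝ) : ℕ → ℝ := fun n => k ^ (2*n+1) / (Nat.factorial (2*n+1) : ℝ)

noncomputable def myg (k : ℝ) : ℝ → ℝ := FormalMultilinearSeries.ofScalarsSum (E := ℝ) (myc k)

lemma myc_pos {k : ℝ} (hk : 0 < k) (n : ℕ) : 0 < myc k n := by
  apply div_pos (pow_pos hk _)
  exact_mod_cast Nat.factorial_pos _

lemma myradius {k : ℝ} (hk : 0 < k) :
    (FormalMultilinearSeries.ofScalars ℝ (myc k)).radius = ⊤ := by
  apply FormalMultilinearSeries.ofScalars_radius_eq_top_of_tendsto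
  · exact Eventually.of_forall fun n => (myc_pos hk n).ne'
  · have hle : ∀ n : ℕ, ‖myc k (n+1)‖ / ‖myc k n‖ ≤ k^2 / (n+1 : ℝ) := by
      intro n
      rw [Real.norm_of_nonneg (myc_pos hk n).le, Real.norm_of_nonneg (myc_pos hk (n+1)).le]
      rw [div_le_div_iff₀ (myc_pos hk n) (by positivity)]
      unfold myc
      have h1 : Nat.factorial (2*(n+1)+1) = (2*n+3) * ((2*n+2) * Nat.factorial (2*n+1)) := by
        have h : 2*(n+1)+1 = (2*n+2)+1 := by ring
        rw [h, Nat.factorial_succ, show 2*n+2 = (2*n+1)+1 from rfl, Nat.factorial_succ]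
      have h2 : k ^ (2*(n+1)+1) = k^(2*n+1) * k^2 := by
        rw [← pow_add]; ring_nf
      rw [h1, h2]
      have hf : (0:ℝ) < (Nat.factorial (2*n+1) : ℝ) := by exact_mod_cast Nat.factorial_pos _
      push_cast
      rw [div_mul_eq_mul_div, ← mul_div_assoc, div_le_div_iff₀ (by positivity) hf]
      have hnn : (0:ℝ) ≤ (n:ℝ) := Nat.cast_nonneg n
      nlinarith [mul_pos (mul_pos (pow_pos hk (2*n+1)) (pow_pos hk 2)) hf,
        mul_pos (mul_pos (mul_pos (pow_pos hk (2*n+1)) (pow_pos hk 2)) hf) (by positivity : (0:ℝ) < (n:ℝ)+1)]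
    have h0 : ∀ n : ℕ, 0 ≤ ‖myc k (n+1)‖ / ‖myc k n‖ := fun n => by positivity
    have hlim : Tendsto (fun n : ℕ => k^2 / (n+1 : ℝ)) atTop (𝓝 0) := by
      have := tendsto_const_div_atTop_nhds_zero_nat (k^2)
      have h2 := this.comp (tendsto_add_atTop_nat 1)
      refine h2.congr fun n => ?_
      simp only [Function.comp_apply]
      push_cast
      ring_nf
    exact squeeze_zero h0 hle hlim

lemma myg_contDiff {k : ℝ} (hk : 0 < k) {n : WithTop ℕ∞} : ContDiff ℝ n (myg k) := by
  have h : HasFPowerSeriesOnBall (myg k) (FormalMultilinearSeries.ofScalars ℝ (myc k)) 0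
      (FormalMultilinearSeries.ofScalars ℝ (myc k)).radius :=
    FormalMultilinearSeries.hasFPowerSeriesOnBall _ (by rw [myradius hk]; exact ENNReal.zero_lt_top)
  rw [contDiff_iff_contDiffAt]
  intro t
  have ht : t ∈ Metric.eball (0:ℝ) (FormalMultilinearSeries.ofScalars ℝ (myc k)).radius := by
    rw [myradius hk]; simp
  exact (h.analyticOnNhd t ht).contDiffAt

lemma myg_hasSum {k : ℝ} (hk : 0 < k) (t : ℝ) :
    HasSum (fun n => myc k n * t ^ n) (myg k t) := by
  have hrad := myradius hk
  have hsummable : Summable (fun n => myc k n * t ^ n) := by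
    have := FormalMultilinearSeries.summable_norm_apply
      (p := FormalMultilinearSeries.ofScalars ℝ (myc k)) (x := t) (by rw [hrad]; simp)
    have h2 : Summable (fun n => ‖myc k n * t ^ n‖) := by
      refine this.of_nonneg_of_le (fun n => norm_nonneg _) fun n => ?_
      rw [← smul_eq_mul, ← FormalMultilinearSeries.ofScalars_apply_eq (𝕜 := ℝ) (E := ℝ)]
    exact h2.of_norm
  have : myg k t = ∑' n, myc k n * t ^ n := by
    rw [myg, FormalMultilinearSeries.ofScalars_sum_eq]
    simp [smul_eq_mul]
  rw [this]
  exact hsummable.hasSum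

lemma myg_val {k : ℝ} (hk : 0 < k) {r : ℝ} (hr : 0 < r) :
    myg k (r^2) = Real.sinh (k * r) / r := by
  have h1 := Real.hasSum_sinh (k * r)
  have h2 := h1.div_const r
  have h3 : (fun n => (k*r) ^ (2*n+1) / (Nat.factorial (2*n+1) : ℝ) / r)
      = fun n => myc k n * (r^2) ^ n := by
    funext n
    unfold myc
    field_simp
    rw [mul_pow, ← pow_mul]
    ring
  rw [h3] at h2
  exact (h2.unique (myg_hasSum hk (r^2))).symm

lemma myg_zero {k : ℝ} : myg k 0 = k := by
  rw [myg]
  have := FormalMultilinearSeries.ofScalarsSum_zero (E := ℝ) (c := myc k)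
  rw [this]
  simp [myc]

lemma myg_mono {k : ℝ} (hk : 0 < k) {t t' : ℝ} (ht : 0 ≤ t) (htt : t ≤ t') :
    myg k t ≤ myg k t' :=
  hasSum_le (fun n => mul_le_mul_of_nonneg_left (pow_le_pow_left₀ ht htt n) (myc_pos hk n).le)
    (myg_hasSum hk t) (myg_hasSum hk t')

lemma myg_eq_pos {k : ℝ} (hk : 0 < k) {t : ℝ} (ht : 0 < t) :
    myg k t = Real.sinh (k * Real.sqrt t) / Real.sqrt t := by
  have h := myg_val hk (Real.sqrt_pos.mpr ht)
  rwa [Real.sq_sqrt ht.le] at h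

lemma myg_hasDerivAt_pos {k : ℝ} (hk : 0 < k) {t : ℝ} (ht : 0 < t) :
    HasDerivAt (myg k)
      ((Real.cosh (k * Real.sqrt t) * (k * (1/(2*Real.sqrt t))) * Real.sqrt t
        - Real.sinh (k * Real.sqrt t) * (1/(2*Real.sqrt t))) / (Real.sqrt t)^2) t := by
  have hst : (0:ℝ) < Real.sqrt t := Real.sqrt_pos.mpr ht
  have hsq : HasDerivAt Real.sqrt (1/(2*Real.sqrt t)) t := Real.hasDerivAt_sqrt ht.ne'
  have hks : HasDerivAt (fun u => k * Real.sqrt u) (k * (1/(2*Real.sqrt t))) t := hsq.const_mul k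
  have hsinh : HasDerivAt (fun u => Real.sinh (k * Real.sqrt u))
      (Real.cosh (k * Real.sqrt t) * (k * (1/(2*Real.sqrt t)))) t :=
    (Real.hasDerivAt_sinh _).comp t hks
  have hE := hsinh.div hsq hst.ne'
  have heq : (fun u => Real.sinh (k * Real.sqrt u) / Real.sqrt u) =ᶠ[nhds t] myg k := by
    filter_upwards [Ioi_mem_nhds ht] with u hu
    exact (myg_eq_pos hk hu).symm
  exact (Filter.EventuallyEq.hasDerivAt_iff heq).mp hE

lemma myg_ode_pos {k : ℝ} (hk : 0 < k) {t : ℝ} (ht : 0 < t) :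
    4*t*(deriv (deriv (myg k)) t) + 6*(deriv (myg k) t) = k^2 * myg k t := by
  have hst : (0:ℝ) < Real.sqrt t := Real.sqrt_pos.mpr ht
  set A : ℝ → ℝ := fun u => (k * Real.cosh (k * Real.sqrt u) * Real.sqrt u
      - Real.sinh (k * Real.sqrt u)) / (2 * u * Real.sqrt u) with hA
  have hderiv1 : ∀ u, 0 < u → deriv (myg k) u = A u := by
    intro u hu
    have hsu : (0:ℝ) < Real.sqrt u := Real.sqrt_pos.mpr hu
    rw [(myg_hasDerivAt_pos hk hu).deriv, hA]
    rw [Real.sq_sqrt hu.le]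
    field_simp
  have hsq : HasDerivAt Real.sqrt (1/(2*Real.sqrt t)) t := Real.hasDerivAt_sqrt ht.ne'
  have hks : HasDerivAt (fun u => k * Real.sqrt u) (k * (1/(2*Real.sqrt t))) t := hsq.const_mul k
  have hsinh : HasDerivAt (fun u => Real.sinh (k * Real.sqrt u))
      (Real.cosh (k * Real.sqrt t) * (k * (1/(2*Real.sqrt t)))) t :=
    (Real.hasDerivAt_sinh _).comp t hks
  have hcosh : HasDerivAt (fun u => Real.cosh (k * Real.sqrt u))
      (Real.sinh (k * Real.sqrt t) * (k * (1/(2*Real.sqrt t)))) t :=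
    (Real.hasDerivAt_cosh _).comp t hks
  have hN := ((hcosh.const_mul k).mul hsq).sub hsinh
  have hD : HasDerivAt (fun u => 2 * u * Real.sqrt u)
      (2 * Real.sqrt t + 2 * t * (1/(2*Real.sqrt t))) t := by
    exact (((hasDerivAt_id t).const_mul 2).mul hsq).congr_deriv (by simp)
  have hD0 : 2 * t * Real.sqrt t ≠ 0 := by positivity
  have hAd := hN.div hD hD0
  have heq : deriv (myg k) =ᶠ[nhds t] A := by
    filter_upwards [Ioi_mem_nhds ht] with u hu
    exact hderiv1 u hu
  have hderiv2 : deriv (deriv (myg k)) t = deriv A t := heq.deriv_eq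
  rw [hderiv2, show deriv A t = _ from hAd.deriv, hderiv1 t ht, hA, myg_eq_pos hk ht]
  simp only [Pi.mul_apply, Pi.sub_apply]
  set s := Real.sqrt t with hs
  have hs2 : s^2 = t := Real.sq_sqrt ht.le
  rw [← hs2]
  have hsne : s ≠ 0 := hst.ne'
  field_simp
  ring

lemma myg_ode {k : ℝ} (hk : 0 < k) {t : ℝ} (ht : 0 ≤ t) :
    4*t*(deriv (deriv (myg k)) t) + 6*(deriv (myg k) t) = k^2 * myg k t := by
  rcases ht.lt_or_eq with h | h
  · exact myg_ode_pos hk h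
  · subst h
    have hgs : ContDiff ℝ ((⊤:ℕ∞):WithTop ℕ∞) (myg k) := myg_contDiff hk
    have hg1 : ContDiff ℝ ((⊤:ℕ∞):WithTop ℕ∞) (deriv (myg k)) := (contDiff_infty_iff_deriv.mp hgs).2
    have hg2 : ContDiff ℝ ((⊤:ℕ∞):WithTop ℕ∞) (deriv (deriv (myg k))) := (contDiff_infty_iff_deriv.mp hg1).2
    set h : ℝ → ℝ := fun t => 4*t*(deriv (deriv (myg k)) t) + 6*(deriv (myg k) t) - k^2 * myg k t
      with hh
    have hcont : Continuous h := by
      rw [hh]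
      exact (((continuous_const.mul continuous_id).mul hg2.continuous).add
        (continuous_const.mul hg1.continuous)).sub
        (continuous_const.mul hgs.continuous)
    have h1 : Filter.Tendsto h (nhdsWithin 0 (Set.Ioi 0)) (nhds (h 0)) :=
      (hcont.tendsto 0).mono_left nhdsWithin_le_nhds
    have h2 : Filter.Tendsto h (nhdsWithin 0 (Set.Ioi 0)) (nhds 0) := by
      apply Filter.Tendsto.congr' _ tendsto_const_nhds
      filter_upwards [self_mem_nhdsWithin] with u hu
      have := myg_ode_pos hk (hu : (0:ℝ) < u)
      rw [hh]
      simp only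
      linarith
    have := tendsto_nhds_unique h1 h2
    have hzero : h 0 = 0 := this
    rw [hh] at hzero
    simp only at hzero
    linarith

open Metric Classical

theorem stmt_17 (R L a : ℝ) (hR : 0 < R) (hL : 0 < L) (ha : 0 < a)
    (φ : EuclideanSpace ℝ (Fin 3) → ℝ)
    (hφ : φ = fun x => if x = 0 then Real.sqrt (a / L) * R / Real.sinh (Real.sqrt (a / L) * R)
      else Real.sinh (Real.sqrt (a / L) * ‖x‖) * R / (Real.sinh (Real.sqrt (a / L) * R) * ‖x‖)) :
    ContDiffOn ℝ 2 φ (ball (0 : EuclideanSpace ℝ (Fin 3)) R) ∧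
    (∀ x ∈ ball (0 : EuclideanSpace ℝ (Fin 3)) R,
      -L * (∑ i : Fin 3, iteratedFDeriv ℝ 2 φ x
          ![EuclideanSpace.single i (1 : ℝ), EuclideanSpace.single i (1 : ℝ)]) +
        a * φ x = 0) ∧
    (∀ x ∈ sphere (0 : EuclideanSpace ℝ (Fin 3)) R, φ x = 1) ∧
    (∀ x : EuclideanSpace ℝ (Fin 3), ‖x‖ ≤ R / 2 →
      φ x ≤ 2 * Real.exp (-Real.sqrt (a / L) * R / 2)) := by
  have haL : 0 < a / L := div_pos ha hL
  set k : ℝ := Real.sqrt (a / L) with hkdef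
  have hk : 0 < k := Real.sqrt_pos.mpr haL
  have hk2 : k ^ 2 = a / L := Real.sq_sqrt haL.le
  have hkR : 0 < k * R := mul_pos hk hR
  have hsinhR : 0 < Real.sinh (k * R) := Real.sinh_pos_iff.mpr hkR
  set Cst : ℝ := R / Real.sinh (k * R) with hCdef
  have hCst : 0 < Cst := div_pos hR hsinhR
  have hφeq : φ = fun x : EuclideanSpace ℝ (Fin 3) => Cst * myg k (‖x‖ ^ 2) := by
    rw [hφ]
    funext x
    by_cases hx : x = 0
    · subst hx
      simp only [if_pos rfl, norm_zero, ne_eq, zero_pow, myg_zero, ↓reduceIte]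
      rw [show ((0:ℝ)^2) = 0 by ring, myg_zero]
      rw [hCdef]
      field_simp
    · rw [if_neg hx]
      have hxn : 0 < ‖x‖ := norm_pos_iff.mpr hx
      rw [myg_val hk hxn, hCdef]
      field_simp
  -- smoothness
  have hsmooth : ContDiff ℝ 2 φ := by
    rw [hφeq]
    exact (contDiff_const.mul (myg_contDiff hk)).comp (contDiff_norm_sq (𝕜 := ℝ))
  refine ⟨hsmooth.contDiffOn, ?_, ?_, ?_⟩
  · -- PDE
    intro x _
    set g1 : ℝ → ℝ := deriv (myg k) with hg1def
    set g2 : ℝ → ℝ := deriv g1 with hg2def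
    have hgs : ContDiff ℝ ((⊤:ℕ∞):WithTop ℕ∞) (myg k) := myg_contDiff hk
    have hg1s : ContDiff ℝ ((⊤:ℕ∞):WithTop ℕ∞) g1 := (contDiff_infty_iff_deriv.mp hgs).2
    have hgd : ∀ s : ℝ, HasDerivAt (myg k) (g1 s) s := fun s =>
      ((hgs.differentiable (by simp)) s).hasDerivAt
    have hg1d : ∀ s : ℝ, HasDerivAt g1 (g2 s) s := fun s =>
      ((hg1s.differentiable (by simp)) s).hasDerivAt
    set M : EuclideanSpace ℝ (Fin 3) →L[ℝ] EuclideanSpace ℝ (Fin 3) →L[ℝ] ℝ :=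
      (isBoundedBilinearMap_inner (𝕜 := ℝ) (E := EuclideanSpace ℝ (Fin 3))).toContinuousLinearMap
      with hMdef
    have hMapp : ∀ y v : EuclideanSpace ℝ (Fin 3), M y v = inner ℝ y v := fun y v => rfl
    have hq : ∀ y : EuclideanSpace ℝ (Fin 3), HasFDerivAt (fun z : EuclideanSpace ℝ (Fin 3) => ‖z‖ ^ 2) ((2:ℝ) • M y) y := by
      intro y
      have h := (hasStrictFDerivAt_norm_sq y).hasFDerivAt
      rw [← Nat.cast_smul_eq_nsmul ℝ] at h
      exact h
    set Φ : EuclideanSpace ℝ (Fin 3) → (EuclideanSpace ℝ (Fin 3) →L[ℝ] ℝ) := fun y => (Cst * g1 (‖y‖^2)) • ((2:ℝ) • M y) with hΦdef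
    have hΦd : ∀ y : EuclideanSpace ℝ (Fin 3), HasFDerivAt φ (Φ y) y := by
      intro y
      rw [hφeq]
      exact ((hgd (‖y‖^2)).const_mul Cst).comp_hasFDerivAt (f := fun z : EuclideanSpace ℝ (Fin 3) => ‖z‖ ^ 2) y (hq y)
    have hfd : fderiv ℝ φ = Φ := funext fun y => (hΦd y).fderiv
    set t : ℝ := ‖x‖ ^ 2 with htdef
    have ht : 0 ≤ t := sq_nonneg _
    have hc : HasFDerivAt (fun y : EuclideanSpace ℝ (Fin 3) => Cst * g1 (‖y‖^2))
        ((Cst * g2 t) • ((2:ℝ) • M x)) x :=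
      ((hg1d t).const_mul Cst).comp_hasFDerivAt (f := fun z : EuclideanSpace ℝ (Fin 3) => ‖z‖ ^ 2) x (hq x)
    have hm : HasFDerivAt (fun y : EuclideanSpace ℝ (Fin 3) => (2:ℝ) • M y)
        ((2:ℝ) • M) x :=
      M.hasFDerivAt.const_smul (2:ℝ)
    have hΦ' : HasFDerivAt Φ ((Cst * g1 t) • ((2:ℝ) • M) +
        ((Cst * g2 t) • ((2:ℝ) • M x)).smulRight ((2:ℝ) • M x)) x :=
      hc.smul hm
    have h2d : fderiv ℝ (fderiv ℝ φ) x = (Cst * g1 t) • ((2:ℝ) • M) +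
        ((Cst * g2 t) • ((2:ℝ) • M x)).smulRight ((2:ℝ) • M x) := by
      rw [hfd]
      exact hΦ'.fderiv
    have heval : ∀ i : Fin 3, iteratedFDeriv ℝ 2 φ x
        ![EuclideanSpace.single i (1 : ℝ), EuclideanSpace.single i (1 : ℝ)] =
        2*(Cst * g1 t) + (4*(Cst * g2 t)) * (x i)^2 := by
      intro i
      rw [iteratedFDeriv_two_apply, h2d]
      simp [ContinuousLinearMap.smul_apply, ContinuousLinearMap.add_apply,
        ContinuousLinearMap.smulRight_apply, hMapp,
        EuclideanSpace.inner_single_right, EuclideanSpace.inner_single_left]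
      ring
    have hnorm : ∑ i : Fin 3, (x i)^2 = t := by
      rw [htdef, EuclideanSpace.norm_eq, Real.sq_sqrt (by positivity)]
      simp [Real.norm_eq_abs, sq_abs]
    rw [Finset.sum_congr rfl (fun i _ => heval i), Finset.sum_add_distrib,
      Finset.sum_const, ← Finset.mul_sum, hnorm]
    simp only [hφeq]
    rw [← htdef]
    have hode := myg_ode hk ht
    rw [← hg1def, ← hg2def] at hode
    have hLk : L * k^2 = a := by
      rw [hk2]
      field_simp
    simp only [Finset.card_univ, Fintype.card_fin, nsmul_eq_mul]
    push_cast
    linear_combination (-(L*Cst)) * hode - (Cst * myg k t) * hLk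
  · -- boundary
    intro x hx
    rw [mem_sphere_zero_iff_norm] at hx
    have hxne : x ≠ 0 := by
      intro h
      rw [h, norm_zero] at hx
      exact hR.ne' hx.symm
    rw [hφ]
    simp only [if_neg hxne, hx]
    field_simp
  · -- bound
    intro x hx
    rw [hφeq]
    have h1 : myg k (‖x‖^2) ≤ myg k ((R/2)^2) :=
      myg_mono hk (sq_nonneg _) (by nlinarith [norm_nonneg x])
    have h2 : myg k ((R/2)^2) = Real.sinh (k * (R/2)) / (R/2) := myg_val hk (by linarith)
    have hy : 0 < k * R / 2 := by linarith
    have hcosh : 0 < Real.cosh (k*R/2) := Real.cosh_pos _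
    have hsinh2 : 0 < Real.sinh (k*R/2) := Real.sinh_pos_iff.mpr hy
    have hdouble : Real.sinh (k * R) = 2 * Real.sinh (k*R/2) * Real.cosh (k*R/2) := by
      have h := Real.sinh_two_mul (k*R/2)
      rw [show 2 * (k*R/2) = k * R by ring] at h
      exact h
    have hval : Cst * (Real.sinh (k * (R/2)) / (R/2)) = 1 / Real.cosh (k*R/2) := by
      rw [hCdef, hdouble, show k * (R/2) = k*R/2 by ring]
      field_simp
    have hexp : Real.exp (k*R/2) ≤ 2 * Real.cosh (k*R/2) := by
      rw [Real.cosh_eq]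
      have := Real.exp_pos (-(k*R/2))
      linarith
    have hfinal : (1:ℝ) / Real.cosh (k*R/2) ≤ 2 * Real.exp (-k * R / 2) := by
      rw [div_le_iff₀ hcosh]
      calc (1:ℝ) = Real.exp (-(k*R/2)) * Real.exp (k*R/2) := by
            rw [← Real.exp_add]; simp
        _ ≤ Real.exp (-(k*R/2)) * (2 * Real.cosh (k*R/2)) :=
            mul_le_mul_of_nonneg_left hexp (Real.exp_pos _).le
        _ = 2 * Real.exp (-k * R / 2) * Real.cosh (k*R/2) := by
            rw [show -(k*R/2) = -k*R/2 by ring]; ring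
    calc Cst * myg k (‖x‖^2) ≤ Cst * (Real.sinh (k * (R/2)) / (R/2)) := by
          rw [← h2]; exact mul_le_mul_of_nonneg_left h1 hCst.le
      _ = 1 / Real.cosh (k*R/2) := hval
      _ ≤ 2 * Real.exp (-k * R / 2) := hfinal
end

section
/- Let a², b², c² > 0 and s₊ = (b² + √(b⁴ + 24a²c²))/(4c²). For Q a 3×3 symmetric traceless matrix, define f_B(Q) = −(a²/2)tr(Q²) − (b²/3)tr(Q³) + (c²/4)(tr(Q²))². Then f_B attains its minimum over symmetric traceless matrices exactly on the set {s₊(n ⊗ n − (1/3)I) : n ∈ ℝ³, |n| = 1}. -/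
open Matrix

set_option maxHeartbeats 1000000

lemma core_ineq (a2 b2 c2 s : ℝ) (ha : 0 < a2) (hb : 0 < b2) (hc : 0 < c2)
    (hs0 : 0 < s) (hrel : 2*c2*s^2 = 3*a2 + b2*s) (x y z : ℝ) (hsum : x + y + z = 0) :
    -(a2/3)*s^2 - (2*b2/27)*s^3 + (c2/9)*s^4 ≤
      -(a2/2)*(x^2+y^2+z^2) - (b2/3)*(x^3+y^3+z^3) + (c2/4)*(x^2+y^2+z^2)^2 := by
  have hz : z = -x - y := by linarith
  subst hz
  have key : 108*s^2*((-(a2/2)*(x^2+y^2+(-x-y)^2) - (b2/3)*(x^3+y^3+(-x-y)^3)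
      + (c2/4)*(x^2+y^2+(-x-y)^2)^2) - (-(a2/3)*s^2 - (2*b2/27)*s^3 + (c2/9)*s^4)) =
      b2*s*(9*(x^2+y^2+4*x*y+s*(x+y))^2 + 3*((x-y)*(3*(x+y)-s))^2
        + 2*(3*(x^2+y^2+x*y)-s^2)^2)
      + 162*a2*((x^2+y^2+(-x-y)^2)/2 - s^2/3)^2 := by
    linear_combination (54*(x^2+x*y+y^2)^2 - 6*s^4) * hrel
  nlinarith [sq_nonneg (x^2+y^2+4*x*y+s*(x+y)), sq_nonneg ((x-y)*(3*(x+y)-s)),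
    sq_nonneg (3*(x^2+y^2+x*y)-s^2), sq_nonneg ((x^2+y^2+(-x-y)^2)/2 - s^2/3),
    mul_pos hb hs0, sq_nonneg s, mul_pos hs0 hs0]

lemma core_eq (a2 b2 c2 s : ℝ) (ha : 0 < a2) (hb : 0 < b2) (hc : 0 < c2)
    (hs0 : 0 < s) (hrel : 2*c2*s^2 = 3*a2 + b2*s) (x y z : ℝ) (hsum : x + y + z = 0)
    (heq : -(a2/2)*(x^2+y^2+z^2) - (b2/3)*(x^3+y^3+z^3) + (c2/4)*(x^2+y^2+z^2)^2 =
      -(a2/3)*s^2 - (2*b2/27)*s^3 + (c2/9)*s^4) :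
    (x = 2*s/3 ∧ y = -s/3 ∧ z = -s/3) ∨ (y = 2*s/3 ∧ x = -s/3 ∧ z = -s/3) ∨
      (z = 2*s/3 ∧ x = -s/3 ∧ y = -s/3) := by
  have hz : z = -x - y := by linarith
  subst hz
  have hbs : 0 < b2*s := mul_pos hb hs0
  have key : (0:ℝ) =
      b2*s*(9*(x^2+y^2+4*x*y+s*(x+y))^2 + 3*((x-y)*(3*(x+y)-s))^2
        + 2*(3*(x^2+y^2+x*y)-s^2)^2)
      + 162*a2*((x^2+y^2+(-x-y)^2)/2 - s^2/3)^2 := by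
    linear_combination (54*(x^2+x*y+y^2)^2 - 6*s^4) * hrel - 108*s^2*heq
  have m1 := mul_nonneg hbs.le (sq_nonneg (x^2+y^2+4*x*y+s*(x+y)))
  have m2 := mul_nonneg hbs.le (sq_nonneg ((x-y)*(3*(x+y)-s)))
  have m3 := mul_nonneg hbs.le (sq_nonneg (3*(x^2+y^2+x*y)-s^2))
  have m4 := mul_nonneg ha.le (sq_nonneg ((x^2+y^2+(-x-y)^2)/2 - s^2/3))
  have hA2 : b2*s*(x^2+y^2+4*x*y+s*(x+y))^2 ≤ 0 := by linarith
  have hB2 : b2*s*((x-y)*(3*(x+y)-s))^2 ≤ 0 := by linarith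
  have hC2 : b2*s*(3*(x^2+y^2+x*y)-s^2)^2 ≤ 0 := by linarith
  have h1 : x^2+y^2+4*x*y+s*(x+y) = 0 := by
    have := (mul_le_mul_iff_right₀ hbs).mp (by linarith : b2*s*(x^2+y^2+4*x*y+s*(x+y))^2 ≤ b2*s*0)
    exact sq_eq_zero_iff.mp (le_antisymm (by linarith) (sq_nonneg _))
  have h2 : (x-y)*(3*(x+y)-s) = 0 := by
    have := (mul_le_mul_iff_right₀ hbs).mp (by linarith : b2*s*((x-y)*(3*(x+y)-s))^2 ≤ b2*s*0)
    exact sq_eq_zero_iff.mp (le_antisymm (by linarith) (sq_nonneg _))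
  have h3 : 3*(x^2+y^2+x*y)-s^2 = 0 := by
    have := (mul_le_mul_iff_right₀ hbs).mp (by linarith : b2*s*(3*(x^2+y^2+x*y)-s^2)^2 ≤ b2*s*0)
    exact sq_eq_zero_iff.mp (le_antisymm (by linarith) (sq_nonneg _))
  clear key heq m1 m2 m3 m4 hA2 hB2 hC2 hrel hsum
  rcases mul_eq_zero.mp h2 with hxy | hxys
  · have hxe : x = y := by linarith
    subst hxe
    have hx1 : 2*x*(3*x+s) = 0 := by linear_combination h1
    rcases mul_eq_zero.mp hx1 with h0 | h4
    · have hx0 : x = 0 := by linarith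
      exfalso; rw [hx0] at h3; nlinarith
    · right; right
      refine ⟨by linarith, by linarith, by linarith⟩
  · have hs' : 3*(x+y) = s := by linarith
    have hfac : (2*x+y)*(x+2*y) = 0 := by
      linear_combination ((3*(x+y)+s)/3)*hs' - (1/3)*h3
    rcases mul_eq_zero.mp hfac with h4 | h4
    · right; left
      refine ⟨by linarith, by linarith, by linarith⟩
    · left
      refine ⟨by linarith, by linarith, by linarith⟩

lemma conj_traces (U D : Matrix (Fin 3) (Fin 3) ℝ) (hU : star U * U = 1) :
    (U * D * star U).trace = D.trace ∧
    ((U * D * star U) * (U * D * star U)).trace = (D * D).trace ∧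
    ((U * D * star U) * (U * D * star U) * (U * D * star U)).trace = (D * D * D).trace := by
  have h2 : (U * D * star U) * (U * D * star U) = U * (D * D) * star U := by
    calc (U * D * star U) * (U * D * star U) = U * D * (star U * U) * D * star U := by
          simp only [Matrix.mul_assoc]
      _ = U * (D * D) * star U := by rw [hU]; simp only [Matrix.mul_one, Matrix.mul_assoc]
  have h3 : (U * D * star U) * (U * D * star U) * (U * D * star U)
      = U * (D * D * D) * star U := by
    rw [h2]
    calc (U * (D * D) * star U) * (U * D * star U) = U * (D*D) * (star U * U) * D * star U := by
          simp only [Matrix.mul_assoc]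
      _ = U * (D * D * D) * star U := by rw [hU]; simp only [Matrix.mul_one, Matrix.mul_assoc]
  have key : ∀ M : Matrix (Fin 3) (Fin 3) ℝ, (U * M * star U).trace = M.trace := by
    intro M
    rw [Matrix.trace_mul_cycle, hU, Matrix.one_mul]
  exact ⟨key D, by rw [h2, key], by rw [h3, key]⟩

lemma eig_data (R : Matrix (Fin 3) (Fin 3) ℝ) (hR : R.IsSymm) :
    ∃ (lam : Fin 3 → ℝ) (U : Matrix (Fin 3) (Fin 3) ℝ), star U * U = 1 ∧ U * star U = 1 ∧
      R = U * diagonal lam * star U ∧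
      R.trace = lam 0 + lam 1 + lam 2 ∧
      (R*R).trace = (lam 0)^2 + (lam 1)^2 + (lam 2)^2 ∧
      (R*R*R).trace = (lam 0)^3 + (lam 1)^3 + (lam 2)^3 := by
  have hh : R.IsHermitian := by
    rw [Matrix.IsHermitian, conjTranspose_eq_transpose_of_trivial]; exact hR
  have hU1 : star (hh.eigenvectorUnitary : Matrix (Fin 3) (Fin 3) ℝ) *
      (hh.eigenvectorUnitary : Matrix (Fin 3) (Fin 3) ℝ) = 1 := Unitary.coe_star_mul_self _
  have hU2 : (hh.eigenvectorUnitary : Matrix (Fin 3) (Fin 3) ℝ) *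
      star (hh.eigenvectorUnitary : Matrix (Fin 3) (Fin 3) ℝ) = 1 := Unitary.coe_mul_star_self _
  have hdec : R = (hh.eigenvectorUnitary : Matrix (Fin 3) (Fin 3) ℝ) *
      diagonal hh.eigenvalues * star (hh.eigenvectorUnitary : Matrix (Fin 3) (Fin 3) ℝ) := by
    have := hh.spectral_theorem
    simpa using this
  obtain ⟨t1, t2, t3⟩ := conj_traces _ (diagonal hh.eigenvalues) hU1
  rw [← hdec] at t1 t2 t3
  refine ⟨hh.eigenvalues, _, hU1, hU2, hdec, ?_, ?_, ?_⟩
  · rw [t1, Matrix.trace_diagonal, Fin.sum_univ_three]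
  · rw [t2, diagonal_mul_diagonal, Matrix.trace_diagonal, Fin.sum_univ_three]
    simp [sq]
  · rw [t3, diagonal_mul_diagonal, diagonal_mul_diagonal, Matrix.trace_diagonal,
      Fin.sum_univ_three]
    simp [pow_succ, pow_zero]

lemma reconstruct (U : Matrix (Fin 3) (Fin 3) ℝ) (hU' : U * star U = 1)
    (lam : Fin 3 → ℝ) (s : ℝ) (j : Fin 3)
    (hlam : ∀ i, lam i = if i = j then 2*s/3 else -s/3) :
    U * diagonal lam * star U =
      s • (vecMulVec (fun i => U i j) (fun i => U i j) -
        (3:ℝ)⁻¹ • (1 : Matrix (Fin 3) (Fin 3) ℝ)) := by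
  ext i k
  have hUU : ∑ m, U i m * U k m = (1 : Matrix (Fin 3) (Fin 3) ℝ) i k := by
    rw [← hU']; simp [Matrix.mul_apply, Matrix.star_apply]
  have hL : (U * diagonal lam * star U) i k = ∑ m, U i m * (lam m * U k m) := by
    rw [Matrix.mul_assoc, Matrix.mul_apply]
    refine Finset.sum_congr rfl fun m _ => ?_
    congr 1
    rw [Matrix.mul_apply]
    simp [Matrix.diagonal_apply, Matrix.star_apply, ite_mul]
  rw [hL]
  have hterm : ∀ m, U i m * (lam m * U k m) =
      s * (if m = j then U i m * U k m else 0) - s/3 * (U i m * U k m) := by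
    intro m; rw [hlam m]
    by_cases h : m = j <;> simp [h] <;> ring
  rw [Finset.sum_congr rfl (fun m _ => hterm m), Finset.sum_sub_distrib, ← Finset.mul_sum,
    ← Finset.mul_sum, Finset.sum_ite_eq']
  simp only [Finset.mem_univ, if_true, Matrix.smul_apply, Matrix.sub_apply, vecMulVec_apply,
    Matrix.smul_apply, smul_eq_mul, hUU]
  ring


lemma uni_props (t : ℝ) (n : Fin 3 → ℝ) (hn : ∑ i, n i ^ 2 = 1) :
    (t • (vecMulVec n n - (3:ℝ)⁻¹ • (1 : Matrix (Fin 3) (Fin 3) ℝ))).IsSymm ∧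
    (t • (vecMulVec n n - (3:ℝ)⁻¹ • (1 : Matrix (Fin 3) (Fin 3) ℝ))).trace = 0 ∧
    ((t • (vecMulVec n n - (3:ℝ)⁻¹ • (1 : Matrix (Fin 3) (Fin 3) ℝ))) *
     (t • (vecMulVec n n - (3:ℝ)⁻¹ • (1 : Matrix (Fin 3) (Fin 3) ℝ)))).trace = 2*t^2/3 ∧
    ((t • (vecMulVec n n - (3:ℝ)⁻¹ • (1 : Matrix (Fin 3) (Fin 3) ℝ))) *
     (t • (vecMulVec n n - (3:ℝ)⁻¹ • (1 : Matrix (Fin 3) (Fin 3) ℝ))) *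
     (t • (vecMulVec n n - (3:ℝ)⁻¹ • (1 : Matrix (Fin 3) (Fin 3) ℝ)))).trace = 2*t^3/9 := by
  set P := vecMulVec n n with hPdef
  have hP : P * P = P := by
    ext i j
    simp only [Matrix.mul_apply, hPdef, vecMulVec_apply]
    calc ∑ k, n i * n k * (n k * n j) = n i * n j * ∑ k, n k ^ 2 := by
          rw [Finset.mul_sum]; exact Finset.sum_congr rfl fun k _ => by ring
      _ = n i * n j := by rw [hn, mul_one]
  have htP : P.trace = 1 := by
    simp only [Matrix.trace, Matrix.diag, hPdef, vecMulVec_apply]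
    rw [← hn]; exact Finset.sum_congr rfl fun k _ => by ring
  have hsymm : P.IsSymm := by
    ext i j; simp [hPdef, vecMulVec_apply, Matrix.transpose_apply, mul_comm]
  set c : ℝ := (3:ℝ)⁻¹ with hc
  have e2 : (P - c • 1) * (P - c • 1) = c • P + (c*c) • (1 : Matrix (Fin 3) (Fin 3) ℝ) := by
    rw [sub_mul, mul_sub, mul_sub, hP, Matrix.mul_smul, Matrix.mul_one, Matrix.smul_mul,
      Matrix.smul_mul, Matrix.one_mul, Matrix.mul_smul, smul_smul]
    rw [hc]; norm_num
    module
  have e3 : (P - c • 1) * ((P - c • 1) * (P - c • 1)) =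
      c • P + (-(c*c*c)) • (1 : Matrix (Fin 3) (Fin 3) ℝ) := by
    rw [e2]
    simp only [mul_add, sub_mul, Matrix.smul_mul, Matrix.mul_smul, hP, Matrix.one_mul,
      Matrix.mul_one, smul_smul]
    module
  have t1 : (1 : Matrix (Fin 3) (Fin 3) ℝ).trace = 3 := by simp
  refine ⟨?_, ?_, ?_, ?_⟩
  · rw [Matrix.IsSymm, Matrix.transpose_smul, Matrix.transpose_sub, Matrix.transpose_smul,
      Matrix.transpose_one, hsymm]
  · rw [Matrix.trace_smul, Matrix.trace_sub, Matrix.trace_smul, htP, t1]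
    simp [hc]
  · have hm : (t • (P - c • 1)) * (t • (P - c • 1)) = (t*t) • ((P - c • 1) * (P - c • 1)) := by
      simp only [Matrix.smul_mul, Matrix.mul_smul, smul_smul]
    rw [hm, e2, Matrix.trace_smul, Matrix.trace_add, Matrix.trace_smul, Matrix.trace_smul,
      htP, t1]
    simp only [hc, smul_eq_mul]; ring
  · have hm : (t • (P - c • 1)) * (t • (P - c • 1)) * (t • (P - c • 1)) =
        (t*(t*t)) • ((P - c • 1) * ((P - c • 1) * (P - c • 1))) := by
      simp only [Matrix.smul_mul, Matrix.mul_smul, smul_smul, Matrix.mul_assoc]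
    rw [hm, e3, Matrix.trace_smul, Matrix.trace_add, Matrix.trace_smul, Matrix.trace_smul,
      htP, t1]
    simp only [hc, smul_eq_mul]; ring

theorem stmt_19 (a2 b2 c2 : ℝ) (ha : 0 < a2) (hb : 0 < b2) (hc : 0 < c2)
    (s : ℝ) (hs : s = (b2 + Real.sqrt (b2 ^ 2 + 24 * a2 * c2)) / (4 * c2))
    (fB : Matrix (Fin 3) (Fin 3) ℝ → ℝ)
    (hfB : fB = fun Q => -(a2 / 2) * (Q * Q).trace - (b2 / 3) * (Q * Q * Q).trace +
      (c2 / 4) * ((Q * Q).trace) ^ 2) :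
    ∀ Q : Matrix (Fin 3) (Fin 3) ℝ, Q.IsSymm → Q.trace = 0 →
      ((∀ R : Matrix (Fin 3) (Fin 3) ℝ, R.IsSymm → R.trace = 0 → fB Q ≤ fB R) ↔
        ∃ n : Fin 3 → ℝ, (∑ i, n i ^ 2 = 1) ∧
          Q = s • (vecMulVec n n - (3 : ℝ)⁻¹ • (1 : Matrix (Fin 3) (Fin 3) ℝ))) := by
  have hfB' : ∀ M : Matrix (Fin 3) (Fin 3) ℝ, fB M = -(a2/2) * (M * M).trace
      - (b2/3) * (M * M * M).trace + (c2/4) * ((M * M).trace)^2 := fun M => by rw [hfB]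
  have hsqrt : 0 < Real.sqrt (b2 ^ 2 + 24 * a2 * c2) :=
    Real.sqrt_pos.mpr (by positivity)
  have hs0 : 0 < s := by
    rw [hs]; apply div_pos (by linarith) (by linarith)
  have hd2 : Real.sqrt (b2 ^ 2 + 24 * a2 * c2) ^ 2 = b2 ^ 2 + 24 * a2 * c2 :=
    Real.sq_sqrt (by positivity)
  have hrel : 2*c2*s^2 = 3*a2 + b2*s := by
    rw [hs]
    field_simp
    rw [show b2 ^ 2 + c2 * 24 * a2 = b2 ^ 2 + 24 * a2 * c2 by ring]
    linear_combination 2 * hd2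
  intro Q hQs hQt
  constructor
  · intro hmin
    have hn0 : ∑ i, (![1,0,0] : Fin 3 → ℝ) i ^ 2 = 1 := by
      simp [Fin.sum_univ_three]
    obtain ⟨R0symm, R0tr, R0t2, R0t3⟩ := uni_props s ![1,0,0] hn0
    have hQle : fB Q ≤ -(a2/3)*s^2 - (2*b2/27)*s^3 + (c2/9)*s^4 := by
      calc fB Q ≤ fB (s • (vecMulVec ![1,0,0] ![1,0,0] -
            (3:ℝ)⁻¹ • (1 : Matrix (Fin 3) (Fin 3) ℝ))) := hmin _ R0symm R0tr
        _ = -(a2/3)*s^2 - (2*b2/27)*s^3 + (c2/9)*s^4 := by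
            rw [hfB', R0t2, R0t3]; ring
    obtain ⟨lam, U, hU1, hU2, hQdec, e0, e1, e2⟩ := eig_data Q hQs
    have hsum0 : lam 0 + lam 1 + lam 2 = 0 := by rw [← e0]; exact hQt
    have hFQ : fB Q = -(a2/2)*((lam 0)^2+(lam 1)^2+(lam 2)^2)
        - (b2/3)*((lam 0)^3+(lam 1)^3+(lam 2)^3)
        + (c2/4)*((lam 0)^2+(lam 1)^2+(lam 2)^2)^2 := by
      rw [hfB', e1, e2]
    have hge := core_ineq a2 b2 c2 s ha hb hc hs0 hrel (lam 0) (lam 1) (lam 2) hsum0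
    have heqF : -(a2/2)*((lam 0)^2+(lam 1)^2+(lam 2)^2)
        - (b2/3)*((lam 0)^3+(lam 1)^3+(lam 2)^3)
        + (c2/4)*((lam 0)^2+(lam 1)^2+(lam 2)^2)^2
        = -(a2/3)*s^2 - (2*b2/27)*s^3 + (c2/9)*s^4 := by
      apply le_antisymm
      · rw [← hFQ]; exact hQle
      · exact hge
    have hcol : ∀ j : Fin 3, ∑ i, (U i j)^2 = 1 := by
      intro j
      have h := congrArg (fun M : Matrix (Fin 3) (Fin 3) ℝ => M j j) hU1
      simp only [Matrix.mul_apply, Matrix.star_apply, Matrix.one_apply_eq, star_trivial] at h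
      rw [← h]
      exact Finset.sum_congr rfl fun i _ => by ring
    have main : ∀ j : Fin 3, (∀ i, lam i = if i = j then 2*s/3 else -s/3) →
        ∃ n : Fin 3 → ℝ, (∑ i, n i ^ 2 = 1) ∧
          Q = s • (vecMulVec n n - (3 : ℝ)⁻¹ • (1 : Matrix (Fin 3) (Fin 3) ℝ)) := by
      intro j hlam
      exact ⟨fun i => U i j, hcol j, by rw [hQdec, reconstruct U hU2 lam s j hlam]⟩
    rcases core_eq a2 b2 c2 s ha hb hc hs0 hrel (lam 0) (lam 1) (lam 2) hsum0 heqF with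
      h | h | h
    · exact main 0 (by intro i; fin_cases i <;> simp [h.1, h.2.1, h.2.2])
    · exact main 1 (by intro i; fin_cases i <;> simp [h.1, h.2.1, h.2.2])
    · exact main 2 (by intro i; fin_cases i <;> simp [h.1, h.2.1, h.2.2])
  · rintro ⟨n, hn, hQe⟩ R hRs hRt
    obtain ⟨Qsymm, Qtr, Qt2, Qt3⟩ := uni_props s n hn
    have hfQ : fB Q = -(a2/3)*s^2 - (2*b2/27)*s^3 + (c2/9)*s^4 := by
      rw [hQe, hfB', Qt2, Qt3]; ring
    obtain ⟨lam, U, hU1, hU2, hRdec, e0, e1, e2⟩ := eig_data R hRs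
    have hsum0 : lam 0 + lam 1 + lam 2 = 0 := by rw [← e0]; exact hRt
    have hge := core_ineq a2 b2 c2 s ha hb hc hs0 hrel (lam 0) (lam 1) (lam 2) hsum0
    rw [hfQ, hfB' R, e1, e2]
    exact hge
end
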